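/- arXiv:2209.04190 — 16 statements merged into one kernel-verified Lean document; each statement's English description precedes it below -/
import Mathlib

section
/- For every integer k ≥ 2 and every n ≥ 2 - k, the identity Q_n^{(k)} = 2(P_{n+1}^{(k)} - P_n^{(k)}) holds, where P and Q are the k-generalized Pell and Pell-Lucas sequences. -/
/-- For every integer k ≥ 2 and every n ≥ 2 - k, the identity
`Q_n^{(k)} = 2 (P_{n+1}^{(k)} - P_n^{(k)})` holds. -/
theorem pellLucas_eq_two_mul_pell_diff (k : ℕ) (hk : 2 ≤ k)
    (P Q : ℤ → ℤ)
    (hPinit : ∀ n : ℤ, 2 - (k : ℤ) ≤ n → n ≤ 0 → P n = 0)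
    (hP1 : P 1 = 1)
    (hPrec : ∀ n : ℤ, 2 ≤ n →
      P n = 2 * P (n - 1) + ∑ i ∈ Finset.Icc 2 k, P (n - (i : ℤ)))
    (hQinit : ∀ n : ℤ, 2 - (k : ℤ) ≤ n → n ≤ -1 → Q n = 0)
    (hQ0 : Q 0 = 2) (hQ1 : Q 1 = 2)
    (hQrec : ∀ n : ℤ, 2 ≤ n →
      Q n = 2 * Q (n - 1) + ∑ i ∈ Finset.Icc 2 k, Q (n - (i : ℤ))) :
    ∀ n : ℤ, 2 - (k : ℤ) ≤ n → Q n = 2 * (P (n + 1) - P n) := by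
  have key : ∀ m : ℕ, ∀ n : ℤ, 2 - (k : ℤ) ≤ n → n < 2 - (k : ℤ) + m →
      Q n = 2 * (P (n + 1) - P n) := by
    intro m
    induction m with
    | zero => intro n h1 h2; omega
    | succ m ih =>
      intro n h1 h2
      rcases lt_or_ge n (2 - (k : ℤ) + m) with h | h
      · exact ih n h1 h
      rcases lt_trichotomy n 0 with hneg | h0 | hpos
      · have hQ : Q n = 0 := hQinit n h1 (by omega)
        have hP : P n = 0 := hPinit n h1 (by omega)
        have hP' : P (n + 1) = 0 := hPinit (n + 1) (by omega) (by omega)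
        rw [hQ, hP, hP']; ring
      · subst h0
        have hP : P 0 = 0 := hPinit 0 h1 le_rfl
        simp [hQ0, hP, hP1]
      rcases lt_trichotomy n 1 with h1' | h1' | h1'
      · omega
      · subst h1'
        have hP2 : P 2 = 2 := by
          rw [hPrec 2 le_rfl]
          have : ∑ i ∈ Finset.Icc 2 k, P (2 - (i : ℤ)) = 0 := by
            apply Finset.sum_eq_zero
            intro i hi
            simp only [Finset.mem_Icc] at hi
            exact hPinit _ (by omega) (by omega)
          rw [this]
          norm_num [hP1]
        norm_num [hQ1, hP2, hP1]
      · -- n ≥ 2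
        have hn2 : 2 ≤ n := by omega
        have ih1 : Q (n - 1) = 2 * (P n - P (n - 1)) := by
          have := ih (n - 1) (by omega) (by omega)
          simpa using this
        have ihs : ∀ i ∈ Finset.Icc 2 k,
            Q (n - (i : ℤ)) = 2 * (P (n + 1 - (i : ℤ)) - P (n - (i : ℤ))) := by
          intro i hi
          simp only [Finset.mem_Icc] at hi
          have := ih (n - (i : ℤ)) (by omega) (by omega)
          rw [this]; ring_nf
        rw [hQrec n hn2, hPrec (n + 1) (by omega), hPrec n hn2,
          Finset.sum_congr rfl ihs, ih1]
        have hsplit : ∑ i ∈ Finset.Icc 2 k,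
            2 * (P (n + 1 - (i : ℤ)) - P (n - (i : ℤ)))
            = 2 * ∑ i ∈ Finset.Icc 2 k, P (n + 1 - (i : ℤ))
              - 2 * ∑ i ∈ Finset.Icc 2 k, P (n - (i : ℤ)) := by
          rw [← Finset.mul_sum, Finset.sum_sub_distrib, mul_sub]
        rw [hsplit]
        have : P (n + 1 - 1) = P n := by norm_num
        rw [this]; ring
  intro n hn
  exact key ((n - (2 - (k : ℤ))).toNat + 1) n hn (by omega)
end

section
/- For every integer k ≥ 2 and every integer n with 1 ≤ n ≤ k + 1, P_n^{(k)} = F_{2n-1}, where F denotes the Fibonacci sequence. -/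
lemma fib_odd_sum (m : ℕ) :
    ∑ j ∈ Finset.Icc 1 m, (Nat.fib (2 * j - 1) : ℤ) = Nat.fib (2 * m) := by
  induction m with
  | zero => simp
  | succ m ih =>
    rw [Finset.sum_Icc_succ_top (by omega), ih]
    have h1 : 2 * (m + 1) - 1 = 2 * m + 1 := by omega
    have h2 : 2 * (m + 1) = 2 * m + 2 := by omega
    rw [h1, h2, Nat.fib_add_two]
    push_cast
    ring

/-- For every integer k ≥ 2 and every integer n with 1 ≤ n ≤ k + 1,
`P_n^{(k)} = F_{2n-1}` where F denotes the Fibonacci sequence. -/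
theorem pell_eq_fib (k : ℕ) (hk : 2 ≤ k)
    (P : ℤ → ℤ)
    (hPinit : ∀ n : ℤ, 2 - (k : ℤ) ≤ n → n ≤ 0 → P n = 0)
    (hP1 : P 1 = 1)
    (hPrec : ∀ n : ℤ, 2 ≤ n →
      P n = 2 * P (n - 1) + ∑ i ∈ Finset.Icc 2 k, P (n - (i : ℤ))) :
    ∀ n : ℕ, 1 ≤ n → n ≤ k + 1 → P (n : ℤ) = Nat.fib (2 * n - 1) := by
  intro n
  induction n using Nat.strong_induction_on with
  | _ n IH =>
    intro hn1 hnk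
    rcases eq_or_lt_of_le hn1 with h1 | h2
    · -- n = 1
      rw [← h1]
      simpa using hP1
    · -- n ≥ 2
      have hn2 : 2 ≤ n := h2
      have hrec := hPrec (n : ℤ) (by exact_mod_cast hn2)
      -- the sum restricted to Icc 2 (n-1)
      have hsum : ∑ i ∈ Finset.Icc 2 k, P ((n : ℤ) - (i : ℤ))
          = ∑ i ∈ Finset.Icc 2 (n - 1), P ((n : ℤ) - (i : ℤ)) := by
        refine (Finset.sum_subset ?_ ?_).symm
        · apply Finset.Icc_subset_Icc_right; omega
        · intro i hi hni
          simp only [Finset.mem_Icc] at hi hni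
          apply hPinit
          · have : i ≤ k := hi.2
            omega
          · have : n ≤ i := by omega
            omega
      have hsum2 : ∑ i ∈ Finset.Icc 2 (n - 1), P ((n : ℤ) - (i : ℤ))
          = ∑ i ∈ Finset.Icc 2 (n - 1), (Nat.fib (2 * (n - i) - 1) : ℤ) := by
        apply Finset.sum_congr rfl
        intro i hi
        simp only [Finset.mem_Icc] at hi
        have hcast : (n : ℤ) - (i : ℤ) = ((n - i : ℕ) : ℤ) := by omega
        rw [hcast]
        exact IH (n - i) (by omega) (by omega) (by omega)
      have hreindex : ∑ i ∈ Finset.Icc 2 (n - 1), (Nat.fib (2 * (n - i) - 1) : ℤ)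
          = ∑ j ∈ Finset.Icc 1 (n - 2), (Nat.fib (2 * j - 1) : ℤ) := by
        apply Finset.sum_nbij' (fun i => n - i) (fun j => n - j)
        · intro i hi; simp only [Finset.mem_Icc] at *; omega
        · intro j hj; simp only [Finset.mem_Icc] at *; omega
        · intro i hi; simp only [Finset.mem_Icc] at hi; omega
        · intro j hj; simp only [Finset.mem_Icc] at hj; omega
        · intro i hi; rfl
      have hprev : P ((n : ℤ) - 1) = (Nat.fib (2 * (n - 1) - 1) : ℤ) := by
        have hcast : (n : ℤ) - 1 = ((n - 1 : ℕ) : ℤ) := by omega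
        rw [hcast]
        exact IH (n - 1) (by omega) (by omega) (by omega)
      rw [hrec, hsum, hsum2, hreindex, hprev, fib_odd_sum]
      -- now pure fibonacci identity
      obtain ⟨m, rfl⟩ : ∃ m, n = m + 2 := ⟨n - 2, by omega⟩
      have e1 : 2 * (m + 2) - 1 = 2 * m + 3 := by omega
      have e2 : 2 * (m + 2 - 1) - 1 = 2 * m + 1 := by omega
      have e3 : 2 * (m + 2 - 2) = 2 * m := by omega
      rw [e1, e2, e3]
      have : Nat.fib (2 * m + 3) = 2 * Nat.fib (2 * m + 1) + Nat.fib (2 * m) := by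
        rw [show 2*m+3 = (2*m+1)+2 by ring, Nat.fib_add_two,
            show 2*m+2 = (2*m)+2 by ring, Nat.fib_add_two]
        ring
      rw [this]
      push_cast
      ring
end

section
/- For every integer k ≥ 2 and every integer n with 1 ≤ n ≤ k, Q_n^{(k)} = 2 F_{2n}, where F denotes the Fibonacci sequence. -/
/-! Subtracting the recurrence at `n - 1` from the one at `n`, the two windows `Q (n - 2), …, Q (n - k)`
and `Q (n - 3), …, Q (n - 1 - k)` cancel except for their end terms. For `3 ≤ n ≤ k` the term
`Q (n - 1 - k)` is one of the initial zeros, so `Q n = 3 Q (n - 1) - Q (n - 2)` in that range. The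
even-indexed Fibonacci numbers satisfy the same recurrence, `F (m + 4) = 3 F (m + 2) - F m`, and the
two sequences start alike: `Q 1 = 2 = 2 F 2` and `Q 2 = 2 Q 1 + Q 0 = 6 = 2 F 4`. -/

open Finset

theorem Nat.fib_add_four_add_fib (m : ℕ) : fib (m + 4) + fib m = 3 * fib (m + 2) := by
  simp only [fib_add_two]
  ring

theorem sum_Icc_sub_sub_sum_Icc_sub_one_sub {M : Type*} [AddCommGroup M] (Q : ℤ → M) (n : ℤ)
    {k : ℕ} (hk : 2 ≤ k) :
    ∑ i ∈ Icc 2 k, Q (n - i) - ∑ i ∈ Icc 2 k, Q (n - 1 - i) = Q (n - 2) - Q (n - 1 - k) := by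
  have htelescope := sum_Icc_sub hk fun i : ℕ => Q (n - i)
  push_cast [sum_sub_distrib, ← sub_sub] at htelescope
  simp only [sub_right_comm n _ (1 : ℤ)] at htelescope
  rw [← neg_sub, htelescope, neg_sub]

section PellLucas

variable {k : ℕ} {Q : ℤ → ℤ}
  (hQinit : ∀ n : ℤ, 2 - (k : ℤ) ≤ n → n ≤ -1 → Q n = 0)
  (hQrec : ∀ n : ℤ, 2 ≤ n → Q n = 2 * Q (n - 1) + ∑ i ∈ Icc 2 k, Q (n - (i : ℤ)))
include hQinit hQrec

theorem pellLucas_two (hk : 2 ≤ k) (hQ0 : Q 0 = 2) (hQ1 : Q 1 = 2) : Q 2 = 6 := by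
  have hwindow : ∑ i ∈ Icc 2 k, Q (2 - (i : ℤ)) = Q 0 := by
    refine (sum_eq_single_of_mem 2 (mem_Icc.mpr ⟨le_rfl, hk⟩) fun i hi hi2 => ?_).trans (by simp)
    rw [mem_Icc] at hi
    exact hQinit _ (by omega) (by omega)
  rw [hQrec 2 le_rfl, hwindow, hQ0, show (2 : ℤ) - 1 = 1 by norm_num, hQ1]
  norm_num

theorem pellLucas_eq_three_mul_sub {n : ℤ} (hn : 3 ≤ n) (hnk : n ≤ k) :
    Q n = 3 * Q (n - 1) - Q (n - 2) := by
  have hwindow := sum_Icc_sub_sub_sum_Icc_sub_one_sub Q n (k := k) (by omega)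
  rw [hQinit (n - 1 - k) (by omega) (by omega)] at hwindow
  have hrec := hQrec n (by omega)
  have hrec_pred := hQrec (n - 1) (by omega)
  rw [sub_sub n 1 1, one_add_one_eq_two] at hrec_pred
  linarith

end PellLucas

theorem pellLucas_eq_two_mul_fib_general (k : ℕ)
    (Q : ℤ → ℤ)
    (hQinit : ∀ n : ℤ, 2 - (k : ℤ) ≤ n → n ≤ -1 → Q n = 0)
    (hQ0 : Q 0 = 2) (hQ1 : Q 1 = 2)
    (hQrec : ∀ n : ℤ, 2 ≤ n →
      Q n = 2 * Q (n - 1) + ∑ i ∈ Finset.Icc 2 k, Q (n - (i : ℤ))) :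
    ∀ n : ℕ, 1 ≤ n → n ≤ k → Q (n : ℤ) = 2 * Nat.fib (2 * n) := by
  intro n
  induction n using Nat.strong_induction_on with
  | _ n ih =>
    intro hn hnk
    match n, hn, hnk with
    | 1, _, _ => simp [hQ1]
    | 2, _, h2k => simp [pellLucas_two hQinit hQrec h2k hQ0 hQ1, Nat.fib_add_two]
    | m + 3, _, hmk =>
      have hrec := pellLucas_eq_three_mul_sub hQinit hQrec (n := (m + 3 : ℕ)) (by omega) (by omega)
      rw [show ((m + 3 : ℕ) : ℤ) - 1 = (m + 2 : ℕ) by push_cast; ring,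
        show ((m + 3 : ℕ) : ℤ) - 2 = (m + 1 : ℕ) by push_cast; ring,
        ih (m + 2) (by omega) (by omega) (by omega), ih (m + 1) (by omega) (by omega) (by omega)] at hrec
      have hfib := Nat.fib_add_four_add_fib (2 * m + 2)
      rw [hrec, show 2 * (m + 3) = 2 * m + 2 + 4 by ring, show 2 * (m + 2) = 2 * m + 2 + 2 by ring,
        show 2 * (m + 1) = 2 * m + 2 by ring]
      omega

/-- For every integer k ≥ 2 and every integer n with 1 ≤ n ≤ k,
`Q_n^{(k)} = 2 F_{2n}` where F denotes the Fibonacci sequence. -/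
theorem pellLucas_eq_two_mul_fib (k : ℕ) (hk : 2 ≤ k)
    (Q : ℤ → ℤ)
    (hQinit : ∀ n : ℤ, 2 - (k : ℤ) ≤ n → n ≤ -1 → Q n = 0)
    (hQ0 : Q 0 = 2) (hQ1 : Q 1 = 2)
    (hQrec : ∀ n : ℤ, 2 ≤ n →
      Q n = 2 * Q (n - 1) + ∑ i ∈ Finset.Icc 2 k, Q (n - (i : ℤ))) :
    ∀ n : ℕ, 1 ≤ n → n ≤ k → Q (n : ℤ) = 2 * Nat.fib (2 * n) :=
  pellLucas_eq_two_mul_fib_general k Q hQinit hQ0 hQ1 hQrec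
end

section
/- For every integer k ≥ 2 and every integer n ≥ 1, α^{n-2} ≤ P_n^{(k)} ≤ α^{n-1}, where α is the unique positive real root of x^k - 2x^{k-1} - x^{k-2} - ... - x - 1. -/
set_option maxHeartbeats 1600000 in
/-- For every integer k ≥ 2 and every integer n ≥ 1,
`α^(n-2) ≤ P_n^{(k)} ≤ α^(n-1)`, where α is the unique positive real root of
`x^k - 2x^(k-1) - x^(k-2) - ⋯ - x - 1`. -/
theorem pell_alpha_bounds (k : ℕ) (hk : 2 ≤ k)
    (P : ℤ → ℤ)
    (hPinit : ∀ n : ℤ, 2 - (k : ℤ) ≤ n → n ≤ 0 → P n = 0)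
    (hP1 : P 1 = 1)
    (hPrec : ∀ n : ℤ, 2 ≤ n →
      P n = 2 * P (n - 1) + ∑ i ∈ Finset.Icc 2 k, P (n - (i : ℤ)))
    (α : ℝ) (hαpos : 0 < α)
    (hαroot : α ^ k - 2 * α ^ (k - 1) - ∑ i ∈ Finset.range (k - 1), α ^ i = 0) :
    ∀ n : ℕ, 1 ≤ n →
      α ^ ((n : ℤ) - 2) ≤ (P (n : ℤ) : ℝ) ∧ (P (n : ℤ) : ℝ) ≤ α ^ ((n : ℤ) - 1) := by
  have hαne : α ≠ 0 := ne_of_gt hαpos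
  set S : ℝ := ∑ i ∈ Finset.range (k - 1), α ^ i with hSdef
  have hαk : α ^ k = 2 * α ^ (k - 1) + S := by linarith
  have hS1 : (1 : ℝ) ≤ S := by
    have h0 : (0:ℕ) ∈ Finset.range (k-1) := by simp; omega
    calc (1:ℝ) = α ^ 0 := by norm_num
    _ ≤ S := Finset.single_le_sum (fun i _ => le_of_lt (pow_pos hαpos i)) h0
  have hpow : α ^ k = α * α ^ (k - 1) := by
    conv_lhs => rw [show k = (k-1) + 1 by omega]
    ring
  have hα2 : 2 < α := by
    have hp : (0:ℝ) < α ^ (k-1) := pow_pos hαpos _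
    nlinarith
  -- geometric sum identity
  have hgeo : S * (α - 1) = α ^ (k - 1) - 1 := geom_sum_mul α (k-1)
  have hquad : α ^ 2 < 3 * α - 1 := by
    have hp : (0:ℝ) < α ^ (k-1) := pow_pos hαpos _
    nlinarith
  set β : ℝ := (3 + Real.sqrt 5) / 2 with hβdef
  have h5 : Real.sqrt 5 ^ 2 = 5 := Real.sq_sqrt (by norm_num)
  have h5p : 0 ≤ Real.sqrt 5 := Real.sqrt_nonneg 5
  have hβ2 : 2 < β := by nlinarith
  have hβq : β ^ 2 = 3 * β - 1 := by rw [hβdef]; nlinarith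
  have hβ3 : β < 3 := by nlinarith
  have hαβ : α < β := by nlinarith
  -- sums over Icc as range sums
  have hIcc : ∀ f : ℤ → ℝ, ∀ c : ℤ, ∑ i ∈ Finset.Icc 2 k, f (c - (i:ℕ)) =
      ∑ j ∈ Finset.range (k - 1), f (c - 2 - (j:ℕ)) := by
    intro f c
    rw [show Finset.Icc 2 k = Finset.Ico 2 (k+1) by rw [Finset.Ico_add_one_right_eq_Icc]]
    rw [Finset.sum_Ico_eq_sum_range]
    refine Finset.sum_congr (by congr 1) (fun j _ => ?_)
    congr 1
    push_cast
    ring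
  have hIccZ : ∀ f : ℤ → ℤ, ∀ c : ℤ, ∑ i ∈ Finset.Icc 2 k, f (c - (i:ℕ)) =
      ∑ j ∈ Finset.range (k - 1), f (c - 2 - (j:ℕ)) := by
    intro f c
    rw [show Finset.Icc 2 k = Finset.Ico 2 (k+1) by rw [Finset.Ico_add_one_right_eq_Icc]]
    rw [Finset.sum_Ico_eq_sum_range]
    refine Finset.sum_congr (by congr 1) (fun j _ => ?_)
    congr 1
    push_cast
    ring
  -- P 2 = 2
  have hP2 : P 2 = 2 := by
    rw [hPrec 2 le_rfl, hIccZ P 2]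
    rw [Finset.sum_eq_zero (fun j hj => ?_)]
    · simp [hP1]
    · simp only [Finset.mem_range] at hj
      exact hPinit _ (by omega) (by omega)
  -- P 3 = 5
  have hP3 : P 3 = 5 := by
    rw [hPrec 3 (by norm_num), hIccZ P 3]
    rw [Finset.sum_eq_single_of_mem 0 (by simp; omega) (fun j hj0 hj => ?_)]
    · simp [hP1, hP2]
    · simp only [Finset.mem_range] at hj0
      have hj1 : 1 ≤ j := Nat.one_le_iff_ne_zero.mpr hj
      refine hPinit _ (by omega) (by omega)
  -- three-term recurrence in the initial stretch
  have hP3rec : ∀ n : ℤ, 3 ≤ n → n ≤ (k:ℤ) + 1 → P n = 3 * P (n-1) - P (n-2) := by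
    intro n h3 hk1
    have A := hPrec n (by omega)
    have B := hPrec (n-1) (by omega)
    rw [hIccZ P n] at A
    rw [hIccZ P (n-1)] at B
    have htel : ∑ j ∈ Finset.range (k-1), (P (n - 2 - (j:ℕ)) - P (n - 2 - ((j+1:ℕ)))) =
        P (n - 2 - ((0:ℕ):ℤ)) - P (n - 2 - ((k-1:ℕ):ℤ)) :=
      Finset.sum_range_sub' (fun j => P (n - 2 - (j:ℕ))) (k-1)
    rw [Finset.sum_sub_distrib] at htel
    have hzero : P (n - 2 - ((k-1:ℕ):ℤ)) = 0 := by
      refine hPinit _ ?_ ?_ <;> push_cast [Nat.cast_sub (by omega : 1 ≤ k)] <;> omega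
    have hre : ∑ j ∈ Finset.range (k-1), P (n - 2 - ((j+1:ℕ))) =
        ∑ j ∈ Finset.range (k-1), P (n - 1 - 2 - (j:ℕ)) := by
      refine Finset.sum_congr rfl (fun j _ => ?_)
      congr 1; push_cast; ring
    rw [hre, hzero] at htel
    simp only [Nat.cast_zero, sub_zero] at htel
    have h1 : P (n-1-1) = P (n-2) := by congr 1; ring
    rw [h1] at B
    omega
  -- the β-bound in the initial stretch
  have hT : ∀ n : ℕ, 2 ≤ n → n ≤ k + 1 →
      1 ≤ (P (n:ℤ) : ℝ) - β ^ (n-2) ∧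
      (P ((n:ℤ)-1) : ℝ) - β ^ (n-3) ≤ (P (n:ℤ) : ℝ) - β ^ (n-2) := by
    intro n
    induction n using Nat.strong_induction_on with
    | _ n ih =>
      intro h2 hk1
      rcases eq_or_lt_of_le h2 with h2' | h2'
      · rw [← h2']
        norm_num [hP2, hP1]
      rcases (show 3 ≤ n by omega).eq_or_lt with h3' | h3'
      · rw [← h3']
        have hg : ((3:ℕ):ℤ) - 1 = ((2:ℕ):ℤ) := by norm_num
        norm_num [hP3, hg, hP2]
        all_goals nlinarith
      -- n ≥ 4
      have h4 : 4 ≤ n := by omega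
      have e1 := ih (n-1) (by omega) (by omega) (by omega)
      have e2 := ih (n-2) (by omega) (by omega) (by omega)
      have hc1 : ((n-1:ℕ):ℤ) = (n:ℤ) - 1 := by omega
      have hc2 : ((n-2:ℕ):ℤ) = (n:ℤ) - 2 := by omega
      rw [hc1, show n-1-2 = n-3 by omega, show n-1-3 = n-4 by omega,
        show (n:ℤ)-1-1 = (n:ℤ)-2 by ring] at e1
      rw [hc2, show n-2-2 = n-4 by omega] at e2
      have hr := hP3rec (n:ℤ) (by omega) (by exact_mod_cast hk1)
      have hrr : (P (n:ℤ) : ℝ) = 3 * (P ((n:ℤ)-1) : ℝ) - (P ((n:ℤ)-2) : ℝ) := by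
        exact_mod_cast congrArg (Int.cast : ℤ → ℝ) hr
      have hb : β ^ (n-2) = 3 * β ^ (n-3) - β ^ (n-4) := by
        rw [show n-2 = (n-4)+2 by omega, show n-3 = (n-4)+1 by omega]
        rw [pow_add, pow_add, hβq]
        ring
      constructor <;> [nlinarith [e1.1, e1.2, e2.1]; nlinarith [e1.1, e1.2, e2.1]]
  -- key zpow sum identity
  have hzsum : ∀ c : ℤ, ∑ i ∈ Finset.Icc 2 k, α ^ (c - (i:ℕ)) = α ^ (c - k) * S := by
    intro c
    rw [hIcc (fun z => α ^ z) c]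
    have : ∀ j ∈ Finset.range (k-1), α ^ (c - 2 - (j:ℕ)) = α ^ (c - k) * α ^ ((k - 2 - j : ℕ)) := by
      intro j hj
      simp only [Finset.mem_range] at hj
      rw [← zpow_natCast α (k-2-j), ← zpow_add₀ hαne]
      congr 1
      push_cast [Nat.cast_sub (by omega : j ≤ k - 2), Nat.cast_sub (by omega : 2 ≤ k)]
      ring
    rw [Finset.sum_congr rfl this, ← Finset.mul_sum]
    congr 1
    calc ∑ j ∈ Finset.range (k-1), α ^ (k-2-j)
        = ∑ j ∈ Finset.range (k-1), α ^ (k-1-1-j) :=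
          Finset.sum_congr rfl (fun j hj => by congr 1)
      _ = S := Finset.sum_range_reflect (fun j => α ^ j) (k-1)
  have hz1 : ∀ c : ℤ, α ^ c = α ^ (c - k) * α ^ ((k:ℤ)) := by
    intro c; rw [← zpow_add₀ hαne]; congr 1; ring
  have hz2 : ∀ c : ℤ, α ^ (c - 1) = α ^ (c - k) * α ^ ((k-1:ℕ)) := by
    intro c
    rw [← zpow_natCast α (k-1), ← zpow_add₀ hαne]
    congr 1
    push_cast [Nat.cast_sub (by omega : 1 ≤ k)]
    ring
  have hαkz : α ^ ((k:ℤ)) = 2 * α ^ ((k-1:ℕ)) + S := by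
    rw [zpow_natCast]; exact hαk
  -- main induction
  intro n
  induction n using Nat.strong_induction_on with
  | _ n ih =>
    intro h1
    rcases eq_or_lt_of_le h1 with h1' | h1'
    · rw [← h1']
      norm_num [hP1]
      all_goals
        have hinv : α * α⁻¹ = 1 := mul_inv_cancel₀ hαne
        nlinarith [inv_nonneg.mpr (le_of_lt hαpos)]
    have h2 : 2 ≤ n := h1'
    have hrec := hPrec (n:ℤ) (by exact_mod_cast h2)
    have hrecR : (P (n:ℤ) : ℝ) = 2 * (P ((n:ℤ)-1) : ℝ) +
        ∑ i ∈ Finset.Icc 2 k, (P ((n:ℤ) - (i:ℕ)) : ℝ) := by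
      rw [hrec]; push_cast; ring
    have hprev := ih (n-1) (by omega) (by omega)
    have hc1 : ((n-1:ℕ):ℤ) = (n:ℤ) - 1 := by omega
    rw [hc1, show (n:ℤ)-1-2 = (n:ℤ)-3 by ring, show (n:ℤ)-1-1 = (n:ℤ)-2 by ring] at hprev
    constructor
    · -- lower bound
      by_cases hnk : n ≤ k + 1
      · -- initial stretch: use β bound
        have hT' := (hT n h2 hnk).1
        have hcast : α ^ ((n:ℤ) - 2) = α ^ ((n-2:ℕ)) := by
          rw [← zpow_natCast α (n-2)]; congr 1; omega
        have hab : α ^ ((n-2:ℕ)) ≤ β ^ (n-2) :=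
          pow_le_pow_left₀ (le_of_lt hαpos) (le_of_lt hαβ) _
        have hβp : (0:ℝ) < β ^ (n-2) := pow_pos (by linarith) _
        rw [hcast]
        linarith
      · -- n ≥ k + 2: full recurrence
        push_neg at hnk
        have hlb : ∀ i ∈ Finset.Icc 2 k, α ^ ((n:ℤ) - 2 - (i:ℕ)) ≤ (P ((n:ℤ) - (i:ℕ)) : ℝ) := by
          intro i hi
          simp only [Finset.mem_Icc] at hi
          have hm : 1 ≤ n - i := by omega
          have := (ih (n-i) (by omega) hm).1
          have hci : ((n-i:ℕ):ℤ) = (n:ℤ) - (i:ℕ) := by omega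
          rw [hci] at this
          rw [show (n:ℤ) - 2 - (i:ℕ) = (n:ℤ) - (i:ℕ) - 2 by ring]
          exact this
        have hsum := Finset.sum_le_sum hlb
        rw [hzsum ((n:ℤ)-2)] at hsum
        have : α ^ ((n:ℤ)-2-k) * α ^ ((k:ℤ)) ≤ (P (n:ℤ) : ℝ) := by
          rw [hαkz]
          have h2p : α ^ ((n:ℤ)-3) = α ^ ((n:ℤ)-2-k) * α ^ ((k-1:ℕ)) := by
            have := hz2 ((n:ℤ)-2); rw [show (n:ℤ)-2-1 = (n:ℤ)-3 by ring] at this; exact this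
          rw [hrecR]
          have hploweq : α ^ ((n:ℤ)-3) ≤ (P ((n:ℤ)-1) : ℝ) := hprev.1
          nlinarith [zpow_pos hαpos ((n:ℤ)-2-k)]
        calc α ^ ((n:ℤ)-2) = α ^ ((n:ℤ)-2-k) * α ^ ((k:ℤ)) := hz1 _
        _ ≤ (P (n:ℤ) : ℝ) := this
    · -- upper bound
      have hub : ∀ i ∈ Finset.Icc 2 k, (P ((n:ℤ) - (i:ℕ)) : ℝ) ≤ α ^ ((n:ℤ) - 1 - (i:ℕ)) := by
        intro i hi
        simp only [Finset.mem_Icc] at hi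
        by_cases hm : 1 ≤ n - i ∧ i < n
        · have := (ih (n-i) (by omega) hm.1).2
          have hci : ((n-i:ℕ):ℤ) = (n:ℤ) - (i:ℕ) := by omega
          rw [hci] at this
          rw [show (n:ℤ) - 1 - (i:ℕ) = (n:ℤ) - (i:ℕ) - 1 by ring]
          exact this
        · have hin : n ≤ i := by omega
          have h0 : P ((n:ℤ) - (i:ℕ)) = 0 := by
            refine hPinit _ (by push_cast; omega) (by push_cast; omega)
          rw [h0]
          push_cast
          exact le_of_lt (zpow_pos hαpos _)
      have hsum := Finset.sum_le_sum hub
      rw [hzsum ((n:ℤ)-1)] at hsum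
      rw [hrecR]
      have h2p : α ^ ((n:ℤ)-2) = α ^ ((n:ℤ)-1-k) * α ^ ((k-1:ℕ)) := by
        have := hz2 ((n:ℤ)-1); rw [show (n:ℤ)-1-1 = (n:ℤ)-2 by ring] at this; exact this
      have hupeq : (P ((n:ℤ)-1) : ℝ) ≤ α ^ ((n:ℤ)-2) := hprev.2
      calc 2 * (P ((n:ℤ)-1) : ℝ) + ∑ i ∈ Finset.Icc 2 k, (P ((n:ℤ) - (i:ℕ)) : ℝ)
          ≤ 2 * α ^ ((n:ℤ)-2) + α ^ ((n:ℤ)-1-k) * S := by linarith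
      _ = α ^ ((n:ℤ)-1-k) * α ^ ((k:ℤ)) := by rw [hαkz, h2p]; ring
      _ = α ^ ((n:ℤ)-1) := (hz1 _).symm
end

section
/- For every integer k ≥ 2 and every integer n ≥ 1, the k-generalized Pell-Lucas number satisfies α^{n-1} < Q_n^{(k)} < 2α^n, where α is the unique positive real root of x^k - 2x^{k-1} - x^{k-2} - ... - x - 1. -/
lemma key_aux (k : ℕ) (hk : 2 ≤ k) (α : ℝ) (hαpos : 0 < α)
    (hroot' : α ^ k = 2 * α ^ (k - 1) + ∑ i ∈ Finset.range (k - 1), α ^ i) :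
    ∀ m : ℤ, α ^ m = 2 * α ^ (m - 1) + ∑ i ∈ Finset.Icc 2 k, α ^ (m - (i : ℤ)) := by
  have hα0 : α ≠ 0 := ne_of_gt hαpos
  intro m
  have hcast : ((k - 1 : ℕ) : ℤ) = (k : ℤ) - 1 := by omega
  have e1 : α ^ (m - k) * α ^ ((k - 1 : ℕ)) = α ^ (m - 1) := by
    rw [← zpow_natCast α (k-1), ← zpow_add₀ hα0, hcast]; congr 1; ring
  have e2 : ∀ i : ℕ, α ^ (m - k) * α ^ i = α ^ (m - k + i) := fun i => by
    rw [← zpow_natCast α i, ← zpow_add₀ hα0]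
  have hsum : ∑ i ∈ Finset.Icc 2 k, α ^ (m - (i : ℤ))
      = ∑ i ∈ Finset.range (k - 1), α ^ (m - k + i) := by
    have hIcc : Finset.Icc 2 k = Finset.Ico 2 (k+1) := by ext x; simp [Nat.lt_succ_iff]
    rw [hIcc, Finset.sum_Ico_eq_sum_range]
    have : k + 1 - 2 = k - 1 := by omega
    rw [this, ← Finset.sum_range_reflect]
    refine Finset.sum_congr rfl fun j hj => ?_
    have hj' : j < k - 1 := Finset.mem_range.mp hj
    congr 1
    omega
  calc α ^ m = α ^ (m - k) * α ^ (k : ℕ) := by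
        rw [← zpow_natCast α k, ← zpow_add₀ hα0]; congr 1; ring
    _ = 2 * (α ^ (m - k) * α ^ ((k-1 : ℕ))) + ∑ i ∈ Finset.range (k-1), α ^ (m - k) * α ^ i := by
        rw [hroot']; rw [mul_add, Finset.mul_sum]; ring
    _ = 2 * α ^ (m - 1) + ∑ i ∈ Finset.Icc 2 k, α ^ (m - (i : ℤ)) := by
        rw [e1, hsum]
        refine congrArg _ (Finset.sum_congr rfl fun i _ => e2 i)

/-- For every integer k ≥ 2 and every integer n ≥ 1,
`α^(n-1) < Q_n^{(k)} < 2α^n`, where α is the unique positive real root of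
`x^k - 2x^(k-1) - x^(k-2) - ⋯ - x - 1`. -/
theorem pellLucas_alpha_bounds (k : ℕ) (hk : 2 ≤ k)
    (Q : ℤ → ℤ)
    (hQinit : ∀ n : ℤ, 2 - (k : ℤ) ≤ n → n ≤ -1 → Q n = 0)
    (hQ0 : Q 0 = 2) (hQ1 : Q 1 = 2)
    (hQrec : ∀ n : ℤ, 2 ≤ n →
      Q n = 2 * Q (n - 1) + ∑ i ∈ Finset.Icc 2 k, Q (n - (i : ℤ)))
    (α : ℝ) (hαpos : 0 < α)
    (hαroot : α ^ k - 2 * α ^ (k - 1) - ∑ i ∈ Finset.range (k - 1), α ^ i = 0) :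
    ∀ n : ℕ, 1 ≤ n →
      α ^ ((n : ℤ) - 1) < (Q (n : ℤ) : ℝ) ∧ (Q (n : ℤ) : ℝ) < 2 * α ^ (n : ℕ) := by
  have hα0 : α ≠ 0 := ne_of_gt hαpos
  have hroot' : α ^ k = 2 * α ^ (k - 1) + ∑ i ∈ Finset.range (k - 1), α ^ i := by linarith
  have hα2 : 2 < α := by
    have hS : 0 < ∑ i ∈ Finset.range (k - 1), α ^ i :=
      Finset.sum_pos (fun i _ => pow_pos hαpos i) (Finset.nonempty_range_iff.mpr (by omega))
    have hkk : k - 1 + 1 = k := by omega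
    have h2 : α ^ k = α * α ^ (k - 1) := by nth_rewrite 1 [← hkk]; rw [pow_succ']
    have ht : 0 < α ^ (k-1) := pow_pos hαpos _
    nlinarith
  have key := key_aux k hk α hαpos hroot'
  -- upper bound for small (nonpositive) indices
  have hQub : ∀ m : ℤ, 2 - (k:ℤ) ≤ m → m ≤ 0 → (Q m : ℝ) ≤ 2 * α ^ m := by
    intro m h1 h2
    rcases eq_or_lt_of_le h2 with h3 | h3
    · rw [h3, hQ0]; norm_num
    · rw [hQinit m h1 (by omega)]
      push_cast
      positivity
  have hQnn : ∀ m : ℤ, 2 - (k:ℤ) ≤ m → m ≤ 0 → (0:ℝ) ≤ (Q m : ℝ) := by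
    intro m h1 h2
    rcases eq_or_lt_of_le h2 with h3 | h3
    · rw [h3, hQ0]; norm_num
    · rw [hQinit m h1 (by omega)]; norm_num
  suffices main : ∀ n : ℕ, 1 ≤ n →
      α ^ ((n : ℤ) - 1) < (Q (n : ℤ) : ℝ) ∧ (Q (n : ℤ) : ℝ) < 2 * α ^ ((n : ℕ) : ℤ) by
    intro n hn
    obtain ⟨h1, h2⟩ := main n hn
    refine ⟨h1, ?_⟩
    rwa [zpow_natCast] at h2
  intro n
  induction n using Nat.strong_induction_on with
  | _ n ih =>
  intro hn
  rcases eq_or_lt_of_le hn with h1 | h1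
  · -- n = 1
    rw [← h1]
    push_cast
    rw [hQ1]
    constructor
    · norm_num
    · push_cast
      rw [zpow_one]
      linarith
  · -- n ≥ 2
    have hn2 : 2 ≤ n := h1
    have hrec := hQrec n (by exact_mod_cast hn2)
    have hQn : (Q (n:ℤ) : ℝ) = 2 * (Q ((n:ℤ) - 1) : ℝ)
        + ∑ i ∈ Finset.Icc 2 k, (Q ((n:ℤ) - (i:ℤ)) : ℝ) := by
      exact_mod_cast congrArg (fun z : ℤ => (z : ℝ)) hrec
    -- lower-bound IH for integer indices
    have hlb : ∀ m : ℤ, 1 ≤ m → m ≤ (n:ℤ) - 1 → α ^ (m - 1) < (Q m : ℝ) := by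
      intro m hm1 hm2
      lift m to ℕ using (by omega : (0:ℤ) ≤ m)
      exact (ih m (by omega) (by omega)).1
    have hub : ∀ m : ℤ, 2 - (k:ℤ) ≤ m → m ≤ (n:ℤ) - 1 → (Q m : ℝ) ≤ 2 * α ^ m := by
      intro m hm1 hm2
      rcases le_or_gt m 0 with h | h
      · exact hQub m hm1 h
      · lift m to ℕ using (by omega : (0:ℤ) ≤ m)
        exact le_of_lt (ih m (by omega) (by omega)).2
    have hQn1 : α ^ ((n:ℤ) - 1 - 1) < (Q ((n:ℤ) - 1) : ℝ) :=
      hlb ((n:ℤ) - 1) (by omega) (by omega)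
    constructor
    · -- lower bound
      have hkey := key ((n:ℤ) - 1)
      rcases le_or_gt (k + 1) n with hcase | hcase
      · -- n ≥ k+1 : all indices positive
        have hterm : ∀ i ∈ Finset.Icc 2 k,
            α ^ ((n:ℤ) - 1 - (i:ℤ)) ≤ (Q ((n:ℤ) - (i:ℤ)) : ℝ) := by
          intro i hi
          obtain ⟨hi1, hi2⟩ := Finset.mem_Icc.mp hi
          have := hlb ((n:ℤ) - i) (by omega) (by omega)
          have hexp : (n:ℤ) - 1 - (i:ℤ) = (n:ℤ) - (i:ℤ) - 1 := by ring
          rw [hexp]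
          exact le_of_lt this
        have hsum := Finset.sum_le_sum hterm
        linarith [hkey, hQn, hsum, hQn1]
      · -- 2 ≤ n ≤ k
        have hnk : n ≤ k := by omega
        have hsplit : Finset.Icc 2 k = Finset.Icc 2 (n-1) ∪ Finset.Icc n k := by
          ext x; simp only [Finset.mem_Icc, Finset.mem_union]; omega
        have hdisj : Disjoint (Finset.Icc 2 (n-1)) (Finset.Icc n k) := by
          simp only [Finset.disjoint_left, Finset.mem_Icc]
          omega
        -- Q-side sums
        have hQsum1 : ∑ i ∈ Finset.Icc 2 (n-1), α ^ ((n:ℤ) - 1 - (i:ℤ))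
            ≤ ∑ i ∈ Finset.Icc 2 (n-1), (Q ((n:ℤ) - (i:ℤ)) : ℝ) := by
          refine Finset.sum_le_sum fun i hi => ?_
          obtain ⟨hi1, hi2⟩ := Finset.mem_Icc.mp hi
          have := hlb ((n:ℤ) - i) (by omega) (by omega)
          have hexp : (n:ℤ) - 1 - (i:ℤ) = (n:ℤ) - (i:ℤ) - 1 := by ring
          rw [hexp]
          exact le_of_lt this
        have hQsum2 : ∑ i ∈ Finset.Icc n k, (Q ((n:ℤ) - (i:ℤ)) : ℝ) = 2 := by
          rw [Finset.sum_eq_single_of_mem n (Finset.mem_Icc.mpr ⟨le_rfl, hnk⟩)]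
          · norm_num [hQ0]
          · intro i hi hine
            obtain ⟨hi1, hi2⟩ := Finset.mem_Icc.mp hi
            have : Q ((n:ℤ) - (i:ℤ)) = 0 := hQinit _ (by omega) (by omega)
            rw [this]; norm_num
        -- geometric tail bound
        have hgeo : ∑ i ∈ Finset.Icc n k, α ^ ((n:ℤ) - 1 - (i:ℤ)) < 2 := by
          have hterm : ∀ i ∈ Finset.Icc n k,
              α ^ ((n:ℤ) - 1 - (i:ℤ)) ≤ (1/2 : ℝ) ^ (i + 1 - n) := by
            intro i hi
            obtain ⟨hi1, hi2⟩ := Finset.mem_Icc.mp hi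
            have hexp : (n:ℤ) - 1 - (i:ℤ) = -((i + 1 - n : ℕ) : ℤ) := by omega
            rw [hexp, zpow_neg, zpow_natCast, ← inv_pow]
            apply pow_le_pow_left₀ (by positivity)
            rw [inv_le_comm₀ hαpos (by norm_num)]
            linarith
          calc ∑ i ∈ Finset.Icc n k, α ^ ((n:ℤ) - 1 - (i:ℤ))
              ≤ ∑ i ∈ Finset.Icc n k, (1/2 : ℝ) ^ (i + 1 - n) :=
                Finset.sum_le_sum hterm
            _ = ∑ j ∈ Finset.range (k + 1 - n), (1/2 : ℝ) ^ (j + 1) := by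
                have hIcc : Finset.Icc n k = Finset.Ico n (k+1) := by
                  ext x; simp [Nat.lt_succ_iff]
                rw [hIcc, Finset.sum_Ico_eq_sum_range]
                refine Finset.sum_congr rfl fun j hj => ?_
                congr 1
                omega
            _ = (1/2 : ℝ) * ∑ j ∈ Finset.range (k + 1 - n), (1/2 : ℝ) ^ j := by
                rw [Finset.mul_sum]
                refine Finset.sum_congr rfl fun j hj => ?_
                rw [pow_succ]
                ring
            _ < 2 := by
                rw [geom_sum_eq (by norm_num)]
                have h0 : (0:ℝ) < (1/2 : ℝ) ^ (k + 1 - n) := by positivity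
                have heq : (1/2 : ℝ) * (((1/2 : ℝ) ^ (k + 1 - n) - 1) / ((1/2 : ℝ) - 1))
                    = 1 - (1/2 : ℝ) ^ (k + 1 - n) := by ring
                rw [heq]
                linarith
        -- α-side split
        have hasplit : ∑ i ∈ Finset.Icc 2 k, α ^ ((n:ℤ) - 1 - (i:ℤ))
            = ∑ i ∈ Finset.Icc 2 (n-1), α ^ ((n:ℤ) - 1 - (i:ℤ))
            + ∑ i ∈ Finset.Icc n k, α ^ ((n:ℤ) - 1 - (i:ℤ)) := by
          rw [hsplit, Finset.sum_union hdisj]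
        have hQsplit : ∑ i ∈ Finset.Icc 2 k, (Q ((n:ℤ) - (i:ℤ)) : ℝ)
            = ∑ i ∈ Finset.Icc 2 (n-1), (Q ((n:ℤ) - (i:ℤ)) : ℝ)
            + ∑ i ∈ Finset.Icc n k, (Q ((n:ℤ) - (i:ℤ)) : ℝ) := by
          rw [hsplit, Finset.sum_union hdisj]
        linarith [hkey, hQn, hQsum1, hQsum2, hgeo, hQn1, hasplit, hQsplit]
    · -- upper bound
      have hkey := key (n:ℤ)
      have hterm : ∀ i ∈ Finset.Icc 2 k,
          (Q ((n:ℤ) - (i:ℤ)) : ℝ) ≤ 2 * α ^ ((n:ℤ) - (i:ℤ)) := by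
        intro i hi
        obtain ⟨hi1, hi2⟩ := Finset.mem_Icc.mp hi
        exact hub ((n:ℤ) - i) (by omega) (by omega)
      have hsum := Finset.sum_le_sum hterm
      have hub1 : (Q ((n:ℤ) - 1) : ℝ) < 2 * α ^ ((n:ℤ) - 1) := by
        have := hlb
        have h := (ih (n-1) (by omega) (by omega)).2
        have hc : (((n-1 : ℕ) : ℤ)) = (n:ℤ) - 1 := by omega
        rwa [hc] at h
      have hmulsum : ∑ i ∈ Finset.Icc 2 k, 2 * α ^ ((n:ℤ) - (i:ℤ))
          = 2 * ∑ i ∈ Finset.Icc 2 k, α ^ ((n:ℤ) - (i:ℤ)) := by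
        rw [Finset.mul_sum]
      linarith [hkey, hQn, hsum, hub1, hmulsum]
end

section
/- Let 2 ≤ l < k be integers, and let α(k) and α(l) denote the unique positive real roots of x^k - 2x^{k-1} - ... - x - 1 and x^l - 2x^{l-1} - ... - x - 1 respectively. Then α(k) > α(l). -/
open Finset

/-- Auxiliary function: `G m x = 2/x + ∑_{i<m-1} x^{-(i+2)}`. -/
noncomputable def alphaG (m : ℕ) (x : ℝ) : ℝ :=
  2 * x⁻¹ + ∑ i ∈ Finset.range (m - 1), (x⁻¹) ^ (i + 2)

lemma alphaG_root (m : ℕ) (hm : 2 ≤ m) (α : ℝ) (hα : 0 < α)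
    (h : α ^ m - 2 * α ^ (m - 1) - ∑ i ∈ Finset.range (m - 1), α ^ i = 0) :
    alphaG m α = 1 := by
  have hα0 : α ≠ 0 := hα.ne'
  have hpow : (α : ℝ) ^ m ≠ 0 := pow_ne_zero _ hα0
  have key : alphaG m α * α ^ m = α ^ m := by
    have e1 : α⁻¹ * α ^ m = α ^ (m - 1) := by
      have : α ^ (m - 1) * α = α ^ m := by
        rw [← pow_succ]; congr 1; omega
      field_simp
      linarith [this]
    have e2 : ∀ i ∈ Finset.range (m - 1),
        (α⁻¹) ^ (i + 2) * α ^ m = α ^ (m - 1 - 1 - i) := by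
      intro i hi
      simp only [Finset.mem_range] at hi
      have hle : i + 2 ≤ m := by omega
      rw [inv_pow, show m - 1 - 1 - i = m - (i + 2) by omega,
        pow_sub₀ α hα0 hle]
      field_simp
    rw [alphaG, add_mul, mul_assoc, e1, Finset.sum_mul, Finset.sum_congr rfl e2,
      Finset.sum_range_reflect (fun i => α ^ i) (m - 1)]
    linarith [h]
  have key' : alphaG m α * α ^ m = 1 * α ^ m := by rw [key, one_mul]
  exact mul_right_cancel₀ hpow key'

/-- If 2 ≤ l < k, then the unique positive real root of
`x^k - 2x^(k-1) - ⋯ - x - 1` is greater than that of `x^l - 2x^(l-1) - ⋯ - x - 1`. -/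
theorem alpha_strict_mono (k l : ℕ) (hl : 2 ≤ l) (hlk : l < k)
    (αk αl : ℝ) (hαkpos : 0 < αk) (hαlpos : 0 < αl)
    (hαk : αk ^ k - 2 * αk ^ (k - 1) - ∑ i ∈ Finset.range (k - 1), αk ^ i = 0)
    (hαl : αl ^ l - 2 * αl ^ (l - 1) - ∑ i ∈ Finset.range (l - 1), αl ^ i = 0) :
    αl < αk := by
  have hk2 : 2 ≤ k := by omega
  have hGl : alphaG l αl = 1 := alphaG_root l hl αl hαlpos hαl
  have hGk : alphaG k αk = 1 := alphaG_root k hk2 αk hαkpos hαk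
  by_contra hcon
  push_neg at hcon
  -- G k αl > 1 : extra positive terms
  have hinvpos : 0 < αl⁻¹ := inv_pos.mpr hαlpos
  have hsplit : alphaG k αl = alphaG l αl +
      ∑ i ∈ Finset.Ico (l - 1) (k - 1), (αl⁻¹) ^ (i + 2) := by
    unfold alphaG
    rw [add_assoc]
    congr 1
    simp only [Finset.range_eq_Ico]
    exact (Finset.sum_Ico_consecutive _ (Nat.zero_le (l - 1))
      (by omega : l - 1 ≤ k - 1)).symm
  have hextra : 0 < ∑ i ∈ Finset.Ico (l - 1) (k - 1), (αl⁻¹) ^ (i + 2) := by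
    apply Finset.sum_pos
    · intro i _; positivity
    · exact Finset.nonempty_Ico.mpr (by omega)
  have h1 : 1 < alphaG k αl := by rw [hsplit, hGl]; linarith
  -- but G k is antitone: αk ≤ αl ⟹ G k αl ≤ G k αk = 1
  have h2 : alphaG k αl ≤ alphaG k αk := by
    unfold alphaG
    have hinv : αl⁻¹ ≤ αk⁻¹ := by gcongr
    gcongr
  rw [hGk] at h2
  linarith
end

section
/- For every integer k ≥ 2, the unique positive real root α of x^k - 2x^{k-1} - ... - x - 1 satisfies φ²(1 - φ^{-k}) < α < φ², where φ = (1 + √5)/2 is the golden ratio. -/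
/-- For every k ≥ 2, the unique positive real root α of
`x^k - 2x^(k-1) - ⋯ - x - 1` satisfies `φ²(1 - φ^(-k)) < α < φ²`,
where φ = (1 + √5)/2. -/
theorem alpha_golden_bounds (k : ℕ) (hk : 2 ≤ k)
    (α : ℝ) (hαpos : 0 < α)
    (hαroot : α ^ k - 2 * α ^ (k - 1) - ∑ i ∈ Finset.range (k - 1), α ^ i = 0) :
    ((1 + Real.sqrt 5) / 2) ^ 2 * (1 - ((1 + Real.sqrt 5) / 2) ^ (-(k : ℤ))) < α ∧
    α < ((1 + Real.sqrt 5) / 2) ^ 2 := by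
  obtain ⟨m, rfl⟩ : ∃ m, k = m + 2 := ⟨k - 2, by omega⟩
  set s := Real.sqrt 5 with hs_def
  have hs2 : s ^ 2 = 5 := Real.sq_sqrt (by norm_num)
  have hs0 : 0 ≤ s := Real.sqrt_nonneg 5
  have hs_gt : 2 < s := by nlinarith
  have hs_lt : s < 3 := by nlinarith
  set p : ℝ := (1 + s) / 2 with hp_def
  have hp_pos : 0 < p := by rw [hp_def]; linarith
  simp only [show m + 2 - 1 = m + 1 from rfl] at hαroot
  set S := ∑ i ∈ Finset.range (m + 1), α ^ i with hS_def
  have hgeom : S * (α - 1) = α ^ (m + 1) - 1 := geom_sum_mul α (m + 1)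
  have key : α ^ (m + 1) * (α ^ 2 - 3 * α + 1) = -1 := by
    have h2 : (α ^ (m + 2) - 2 * α ^ (m + 1)) * (α - 1) = α ^ (m + 1) - 1 := by
      rw [show α ^ (m + 2) - 2 * α ^ (m + 1) = S from by linarith]
      exact hgeom
    linear_combination h2
  have hS1 : (1 : ℝ) ≤ S := by
    have h0 : α ^ 0 ≤ S := Finset.single_le_sum (f := fun i => α ^ i)
      (fun i _ => by positivity) (Finset.mem_range.mpr (Nat.succ_pos m))
    simpa using h0
  have hαm1 : 0 < α ^ (m + 1) := by positivity
  have hα2 : 2 < α := by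
    nlinarith [hαroot, hS1, hαm1, pow_succ α (m + 1)]
  have hneg : α ^ 2 - 3 * α + 1 < 0 := by nlinarith [key, hαm1]
  have hq : p ^ 2 * (3 - p ^ 2) = 1 := by
    rw [hp_def]; linear_combination (-(s ^ 2 + 4 * s - 1) / 16) * hs2
  have hp2 : p ^ 2 = (3 + s) / 2 := by rw [hp_def]; linear_combination hs2 / 4
  have hqlt : 3 - p ^ 2 < 1 := by rw [hp2]; linarith
  have hfac2 : (α - p ^ 2) * (α - (3 - p ^ 2)) = α ^ 2 - 3 * α + 1 := by
    linear_combination hq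
  have hαq : (1 : ℝ) < α - (3 - p ^ 2) := by linarith
  have hupper : α < p ^ 2 := by nlinarith [hfac2, hneg, hαq]
  have hple : p ≤ 2 := by rw [hp_def]; linarith
  have hpm : p ^ m ≤ 2 ^ m := pow_le_pow_left₀ (le_of_lt hp_pos) hple m
  have h2m : (2 : ℝ) ^ (m + 1) ≤ α ^ (m + 1) :=
    pow_le_pow_left₀ (by norm_num) (le_of_lt hα2) (m + 1)
  have hpm_lt : p ^ m < α ^ (m + 1) := by
    have h2s : (2 : ℝ) ^ (m + 1) = 2 * 2 ^ m := by ring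
    have h2p : (0 : ℝ) < 2 ^ m := by positivity
    linarith
  have hfac : (p ^ 2 - α) * ((α - (3 - p ^ 2)) * α ^ (m + 1)) = 1 := by
    linear_combination -key - α ^ (m + 1) * hq
  have hpm0 : 0 < p ^ m := pow_pos hp_pos m
  have hkey_lt : (p ^ 2 - α) * p ^ m < 1 := by
    have hpa : 0 < p ^ 2 - α := by linarith
    calc (p ^ 2 - α) * p ^ m
        < (p ^ 2 - α) * ((α - (3 - p ^ 2)) * α ^ (m + 1)) := by
          apply mul_lt_mul_of_pos_left _ hpa
          nlinarith [hpm_lt, hαq, hαm1]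
      _ = 1 := hfac
  constructor
  · have hzpow : p ^ (-((m + 2 : ℕ) : ℤ)) = (p ^ (m + 2))⁻¹ := by
      rw [zpow_neg, zpow_natCast]
    rw [hzpow]
    have hne : p ≠ 0 := ne_of_gt hp_pos
    have hEq : p ^ 2 * (1 - (p ^ (m + 2))⁻¹) = p ^ 2 - (p ^ m)⁻¹ := by
      field_simp
      ring
    rw [hEq]
    have hlt : p ^ 2 - α < (p ^ m)⁻¹ := by
      rw [inv_eq_one_div, lt_div_iff₀ hpm0]
      exact hkey_lt
    linarith
  · exact hupper
end

section
/- For every integer k ≥ 2, the value g_k(α) = (α - 1)/((k+1)α² - 3kα + k - 1) satisfies 0.276 < g_k(α) < 0.5, where α is the unique positive real root of x^k - 2x^{k-1} - ... - x - 1. -/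
/-! Multiplying the root equation by `α - 1` collapses the geometric sum and gives
`α ^ (k - 1) * (α² - 3α + 1) = -1`, so the denominator of `g_k(α)` equals `α² - 1 - c` with
`c = k / α ^ (k - 1)`. Since `α > 2` we have `α ^ (k - 1) > k`, i.e. `0 < c < 1`, and `α` lies below
the root `φ²` of `x² - 3x + 1`. Hence `g_k(α)` lies strictly between `1 / (α + 1) > 1 / (φ² + 1) ≈ 0.2764`
and `(α - 1) / (α² - 2) < 1 / 2`. -/

theorem pow_mul_quadratic_eq_neg_one {R : Type*} [CommRing R] {α : R} {n : ℕ}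
    (h : α ^ (n + 1) - 2 * α ^ n - ∑ i ∈ Finset.range n, α ^ i = 0) :
    α ^ n * (α ^ 2 - 3 * α + 1) = -1 := by
  linear_combination (α - 1) * h + geom_sum_mul α n

theorem two_lt_of_pow_succ_sub_two_mul_pow_sub_geom_sum_eq_zero {α : ℝ} (hα : 0 < α) {n : ℕ}
    (hn : 1 ≤ n) (h : α ^ (n + 1) - 2 * α ^ n - ∑ i ∈ Finset.range n, α ^ i = 0) : 2 < α := by
  have hsum : 1 ≤ ∑ i ∈ Finset.range n, α ^ i := by
    simpa using Finset.single_le_sum (f := (α ^ ·)) (fun i _ => (pow_pos hα i).le)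
      (Finset.mem_range.mpr hn)
  have hfactor : α ^ n * (α - 2) = ∑ i ∈ Finset.range n, α ^ i := by linear_combination h
  have : 0 < α ^ n * (α - 2) := by linarith
  linarith [(pos_iff_pos_of_mul_pos this).mp (pow_pos hα n)]

theorem add_one_lt_pow_of_two_lt {α : ℝ} (hα : 2 < α) {n : ℕ} (hn : 1 ≤ n) :
    (n : ℝ) + 1 < α ^ n := by
  have hn' : (1 : ℝ) ≤ n := by exact_mod_cast hn
  calc (n : ℝ) + 1 < 1 + n * (α - 1) := by nlinarith
    _ ≤ (1 + (α - 1)) ^ n := one_add_mul_le_pow (by linarith) n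
    _ = α ^ n := by ring

theorem div_sq_sub_one_sub_bounds {α c : ℝ} (hα : 2 < α) (hq : α ^ 2 - 3 * α + 1 < 0)
    (hc₀ : 0 < c) (hc₁ : c < 1) :
    0.276 < (α - 1) / (α ^ 2 - 1 - c) ∧ (α - 1) / (α ^ 2 - 1 - c) < 0.5 := by
  have hD : 0 < α ^ 2 - 1 - c := by nlinarith
  constructor
  · rw [lt_div_iff₀ hD]
    nlinarith
  · rw [div_lt_iff₀ hD]
    nlinarith

/-- For every integer k ≥ 2, `0.276 < g_k(α) < 0.5` where
`g_k(z) = (z - 1)/((k+1)z² - 3kz + k - 1)` and α is the unique positive real root of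
`x^k - 2x^(k-1) - ⋯ - x - 1`. -/
theorem g_k_alpha_bounds (k : ℕ) (hk : 2 ≤ k)
    (α : ℝ) (hαpos : 0 < α)
    (hαroot : α ^ k - 2 * α ^ (k - 1) - ∑ i ∈ Finset.range (k - 1), α ^ i = 0) :
    0.276 < (α - 1) / (((k : ℝ) + 1) * α ^ 2 - 3 * (k : ℝ) * α + (k : ℝ) - 1) ∧
    (α - 1) / (((k : ℝ) + 1) * α ^ 2 - 3 * (k : ℝ) * α + (k : ℝ) - 1) < 0.5 := by
  obtain ⟨n, rfl⟩ : ∃ n, k = n + 1 := ⟨k - 1, by omega⟩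
  have hn : 1 ≤ n := by omega
  rw [Nat.add_sub_cancel] at hαroot
  have hP : 0 < α ^ n := pow_pos hαpos n
  have hE := pow_mul_quadratic_eq_neg_one hαroot
  have h2 := two_lt_of_pow_succ_sub_two_mul_pow_sub_geom_sum_eq_zero hαpos hn hαroot
  have hq : α ^ 2 - 3 * α + 1 < 0 := by nlinarith
  have hD : ((↑(n + 1) : ℝ) + 1) * α ^ 2 - 3 * ↑(n + 1) * α + ↑(n + 1) - 1
      = α ^ 2 - 1 - (n + 1) / α ^ n := by
    field_simp
    push_cast
    linear_combination (n + 1 : ℝ) * hE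
  rw [hD]
  exact div_sq_sub_one_sub_bounds h2 hq (by positivity)
    ((div_lt_one hP).mpr (add_one_lt_pow_of_two_lt h2 hn))
end

section
/- For every integer k ≥ 2, the unique positive real root α of x^k - 2x^{k-1} - ... - x - 1 satisfies c_k < α < φ², where c_k = (3k + √(5k² + 4))/(2k + 2) and φ = (1 + √5)/2. -/
set_option maxHeartbeats 1000000

/-- For every k ≥ 2, the unique positive real root α of
`x^k - 2x^(k-1) - ⋯ - x - 1` satisfies `c_k < α < φ²` where
`c_k = (3k + √(5k² + 4))/(2k + 2)` and φ = (1 + √5)/2. -/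
theorem alpha_ck_bounds (k : ℕ) (hk : 2 ≤ k)
    (α : ℝ) (hαpos : 0 < α)
    (hαroot : α ^ k - 2 * α ^ (k - 1) - ∑ i ∈ Finset.range (k - 1), α ^ i = 0) :
    (3 * (k : ℝ) + Real.sqrt (5 * (k : ℝ) ^ 2 + 4)) / (2 * (k : ℝ) + 2) < α ∧
    α < ((1 + Real.sqrt 5) / 2) ^ 2 := by
  obtain ⟨m, rfl⟩ : ∃ m, k = m + 1 := ⟨k - 1, by omega⟩
  have hm : 1 ≤ m := by omega
  simp only [Nat.add_sub_cancel] at hαroot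
  have hgs : (∑ i ∈ Finset.range m, α ^ i) * (α - 1) = α ^ m - 1 := geom_sum_mul α m
  have hkey : (3 * α - α ^ 2 - 1) * α ^ m = 1 := by
    linear_combination (1 - α) * hαroot - hgs
  have hpm : (0:ℝ) < α ^ m := pow_pos hαpos m
  have ha0 : 0 < 3 * α - α ^ 2 - 1 := by nlinarith [hkey, hpm]
  constructor
  · -- lower bound
    set M : ℝ := (m : ℝ) with hMdef
    have hM1 : (1:ℝ) ≤ M := by rw [hMdef]; exact_mod_cast hm
    push_cast
    by_contra hcon
    push_neg at hcon
    set t : ℝ := Real.sqrt (5 * (M + 1) ^ 2 + 4) with htdef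
    set c : ℝ := (3 * (M + 1) + t) / (2 * (M + 1) + 2) with hcdef
    have ht2 : t ^ 2 = 5 * (M + 1) ^ 2 + 4 := Real.sq_sqrt (by positivity)
    have hle : α ≤ c := hcon
    have hc' : c * (2 * M + 4) = 3 * M + 3 + t := by
      rw [hcdef]
      field_simp
      ring
    have hqc : (M + 2) * c ^ 2 - 3 * (M + 1) * c + M = 0 := by
      have h0 : (2 * M + 4) ^ 2 * ((M + 2) * c ^ 2 - 3 * (M + 1) * c + M) = 0 := by
        have e1 : (M + 2) * (c * (2 * M + 4)) ^ 2
            - 3 * (M + 1) * (2 * M + 4) * (c * (2 * M + 4)) + M * (2 * M + 4) ^ 2 = 0 := by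
          rw [hc']
          linear_combination (M + 2) * ht2
        linear_combination e1
      have hd : ((2 : ℝ) * M + 4) ^ 2 ≠ 0 := by positivity
      rcases mul_eq_zero.mp h0 with h | h
      · exact absurd h hd
      · exact h
    rcases lt_trichotomy α 1 with h1 | h1 | h1
    · -- α < 1 : contradiction with hkey
      have hα2 : α < 2 := by linarith
      have hamlt : α ^ m < 1 := pow_lt_one₀ hαpos.le h1 (by omega)
      have ha1 : 3 * α - α ^ 2 - 1 < 1 := by nlinarith [h1, hα2]
      nlinarith [hkey, hpm, hamlt, ha0, ha1]
    · -- α = 1 : contradiction with the root equation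
      subst h1
      simp at hαroot
      have : (1:ℝ) ≤ (m : ℝ) := by exact_mod_cast hm
      nlinarith [hαroot]
    · -- 1 < α ≤ c : main case
      have hc1 : 1 < c := lt_of_lt_of_le h1 hle
      have hB : 1 + M * (α - 1) ≤ α ^ m := by
        have h := one_add_mul_le_pow (a := α - 1) (by linarith) m
        have e : (1 + (α - 1)) = α := by ring
        rw [e] at h
        exact h
      have h4 : (3 * α - α ^ 2 - 1) * (1 + M * (α - 1)) ≤ (3 * α - α ^ 2 - 1) * α ^ m :=
        mul_le_mul_of_nonneg_left hB ha0.le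
      have h5 : (3 * α - α ^ 2 - 1) * (1 + M * (α - 1)) ≤ 1 := by
        calc (3 * α - α ^ 2 - 1) * (1 + M * (α - 1)) ≤ (3 * α - α ^ 2 - 1) * α ^ m := h4
          _ = 1 := hkey
      have hF : (α - 1) * (-M * α ^ 2 + (3 * M - 1) * α + (2 - M)) ≤ 0 := by nlinarith [h5]
      have hGpos : 0 < -M * α ^ 2 + (3 * M - 1) * α + (2 - M) := by
        have key : (M + 2) * (c - 1) * (-M * α ^ 2 + (3 * M - 1) * α + (2 - M))
            = (M + 2) * (M + 1) * (c - α) + ((2 * M - 2) * c + 4) * (α - 1)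
              + (M + 2) * M * (α - 1) * (c - α) * (c - 1)
              - M * (α - 1) * ((M + 2) * c ^ 2 - 3 * (M + 1) * c + M) := by ring
        have t1 : 0 ≤ (M + 2) * (M + 1) * (c - α) :=
          mul_nonneg (mul_nonneg (by linarith) (by linarith)) (by linarith)
        have t2 : 0 < ((2 * M - 2) * c + 4) * (α - 1) :=
          mul_pos (by nlinarith [hc1, hM1]) (by linarith)
        have t3 : 0 ≤ (M + 2) * M * (α - 1) * (c - α) * (c - 1) := by
          apply mul_nonneg
          apply mul_nonneg
          apply mul_nonneg
          apply mul_nonneg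
          all_goals linarith
        have t4 : M * (α - 1) * ((M + 2) * c ^ 2 - 3 * (M + 1) * c + M) = 0 := by
          linear_combination M * (α - 1) * hqc
        have hprod : 0 < (M + 2) * (c - 1) * (-M * α ^ 2 + (3 * M - 1) * α + (2 - M)) := by
          rw [key]; linarith [t1, t2, t3, t4]
        have hpos2 : 0 < (M + 2) * (c - 1) := mul_pos (by linarith) (by linarith)
        nlinarith [hprod, hpos2]
      nlinarith [hF, hGpos, h1]
  · -- upper bound
    have hs2 : Real.sqrt 5 ^ 2 = 5 := Real.sq_sqrt (by norm_num)
    have hs0 : (0:ℝ) ≤ Real.sqrt 5 := Real.sqrt_nonneg 5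
    have hphi : ((1 + Real.sqrt 5) / 2) ^ 2 = (3 + Real.sqrt 5) / 2 := by
      linear_combination hs2 / 4
    rw [hphi]
    nlinarith [ha0, hs2, hs0]
end

section
/- For every integer k ≥ 2 and every real t with α < t < φ², the inequality (k+1)t² - 3kt + k - 1 > 2 holds, where α is the unique positive real root of x^k - 2x^{k-1} - ... - x - 1 and φ = (1+√5)/2. -/
/-!
Write `k = n + 1`. The root equation says `α ^ n (α - 2) = 1 + α + ⋯ + α ^ (n - 1) ≥ 0`,
so `α ≥ 2`, and multiplying it by `α - 1` gives `α ^ n (α² - 3α + 1) = -1`. As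
`α ^ n ≥ 2 ^ n ≥ n + 1`, this yields `(n + 1)(α² - 3α + 1) ≥ -1`, hence
`(k + 1)α² - 3kα + k - 1 = (n + 1)(α² - 3α + 1) + α² - 1 ≥ α² - 2 ≥ 2`.
The quadratic has its vertex below `3/2`, so it is strictly increasing on `[α, ∞)`.
-/

open Finset

/-- `psi n` is the paper's `Ψ_{n+1}`; indexing by `n = k - 1` avoids truncated subtraction. -/
def psi (n : ℕ) (x : ℝ) : ℝ := x ^ (n + 1) - 2 * x ^ n - ∑ i ∈ range n, x ^ i

/-- The denominator of the paper's `g_k`. -/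
def quadDenom (k : ℕ) (t : ℝ) : ℝ := (k + 1) * t ^ 2 - 3 * k * t + k - 1

theorem natCast_add_one_le_pow {α : ℝ} (hα : 2 ≤ α) (n : ℕ) :
    (n : ℝ) + 1 ≤ α ^ n := by
  have := one_add_mul_le_pow (show (-2 : ℝ) ≤ α - 1 by linarith) n
  rw [add_sub_cancel] at this
  nlinarith [(Nat.cast_nonneg n : (0 : ℝ) ≤ n)]

section RootOfPsi

variable {n : ℕ} {α : ℝ}

theorem two_le_of_psi_eq_zero (hα : 0 < α) (hroot : psi n α = 0) : 2 ≤ α := by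
  have hsum : 0 ≤ ∑ i ∈ range n, α ^ i := sum_nonneg fun i _ => by positivity
  have hfactor : α ^ n * (α - 2) = ∑ i ∈ range n, α ^ i := by
    rw [psi, pow_succ] at hroot
    linarith
  nlinarith [pow_pos hα n]

theorem pow_mul_quadratic_eq_neg_one_of_psi_eq_zero (hroot : psi n α = 0) :
    α ^ n * (α ^ 2 - 3 * α + 1) = -1 := by
  have hmul : (α ^ (n + 1) - 2 * α ^ n) * (α - 1) = α ^ n - 1 := by
    rw [← geom_sum_mul, sub_eq_zero.mp hroot]
  rw [pow_succ] at hmul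
  linear_combination hmul

theorem two_le_quadDenom_of_psi_eq_zero (hα : 0 < α) (hroot : psi n α = 0) :
    2 ≤ quadDenom (n + 1) α := by
  have htwo := two_le_of_psi_eq_zero hα hroot
  have hkey := pow_mul_quadratic_eq_neg_one_of_psi_eq_zero hroot
  have hbound := natCast_add_one_le_pow htwo n
  have hquad_nonpos : α ^ 2 - 3 * α + 1 ≤ 0 := by nlinarith [pow_pos hα n]
  have hscaled : -1 ≤ ((n : ℝ) + 1) * (α ^ 2 - 3 * α + 1) := by nlinarith
  rw [quadDenom]
  push_cast
  nlinarith

end RootOfPsi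

theorem quadDenom_strictMonoOn (k : ℕ) : StrictMonoOn (quadDenom k) (Set.Ici (3 / 2)) := by
  intro s hs t _ hst
  have hslope : 0 < ((k : ℝ) + 1) * (t + s) - 3 * k := by
    nlinarith [Set.mem_Ici.mp hs, (Nat.cast_nonneg k : (0 : ℝ) ≤ k)]
  simp only [quadDenom]
  nlinarith [mul_pos (sub_pos.mpr hst) hslope]

theorem quadratic_gt_two_general (k : ℕ)
    (α : ℝ) (hαpos : 0 < α)
    (hαroot : α ^ k - 2 * α ^ (k - 1) - ∑ i ∈ Finset.range (k - 1), α ^ i = 0) :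
    ∀ t : ℝ, α < t → t < ((1 + Real.sqrt 5) / 2) ^ 2 →
      ((k : ℝ) + 1) * t ^ 2 - 3 * (k : ℝ) * t + (k : ℝ) - 1 > 2 := by
  intro t hαt _
  cases k with
  | zero => norm_num at hαroot
  | succ n =>
    have hroot : psi n α = 0 := by simpa only [psi, Nat.add_sub_cancel] using hαroot
    have hα : (3 / 2 : ℝ) ≤ α := by linarith [two_le_of_psi_eq_zero hαpos hroot]
    have hmono := quadDenom_strictMonoOn (n + 1) (Set.mem_Ici.mpr hα)
      (Set.mem_Ici.mpr (by linarith)) hαt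
    exact (two_le_quadDenom_of_psi_eq_zero hαpos hroot).trans_lt hmono

/-- For every integer k ≥ 2 and every real t with α < t < φ², the inequality
`(k+1)t² - 3kt + k - 1 > 2` holds, where α is the unique positive real root of
`x^k - 2x^(k-1) - ⋯ - x - 1` and φ = (1+√5)/2. -/
theorem quadratic_gt_two (k : ℕ) (hk : 2 ≤ k)
    (α : ℝ) (hαpos : 0 < α)
    (hαroot : α ^ k - 2 * α ^ (k - 1) - ∑ i ∈ Finset.range (k - 1), α ^ i = 0) :
    ∀ t : ℝ, α < t → t < ((1 + Real.sqrt 5) / 2) ^ 2 →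
      ((k : ℝ) + 1) * t ^ 2 - 3 * (k : ℝ) * t + (k : ℝ) - 1 > 2 :=
  quadratic_gt_two_general k α hαpos hαroot
end

section
/- For every integer k ≥ 2 and every integer n ≥ 2 - k, |Q_n^{(k)} - (2α - 2) g_k(α) α^n| < 2, where α is the unique positive real root of x^k - 2x^{k-1} - ... - x - 1 and g_k(z) = (z - 1)/((k+1)z² - 3kz + k - 1). -/
/-!
The root `α ≠ 1` of `p(X) = X^k - 2X^(k-1) - ⋯ - X - 1` is also a root of
`(X - 1) p(X) = X^(k+1) - 3X^k + X^(k-1) + 1`, which therefore factors as `(X - α) s(X)` with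
`s(X) = X^k - (3 - α) X^(k-1) - ∑_{i=2}^k α^(i-k-1) X^(k-i)`. The error `E n = Q n - c α^n`,
`c = (2α - 2) g_k(α)`, satisfies the recurrence of `p` for `n ≥ 2`, and `c` is exactly the value
for which it also satisfies the recurrence of `s` at `n = 2`, hence for all `n ≥ 2`.
Since `2 < α < 3`, the coefficients of `s` are negative apart from the leading one and `s(1) = 0`,
so each `E n` with `n ≥ 2` is a convex combination of `E (n-1), …, E (n-k)`. The bound `|E n| < 2`
therefore propagates from the initial values `-c α^n` (`2 - k ≤ n ≤ -1`), `2 - c` and `2 - c α`,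
using `0 < c` and `c α < 4`.
-/

open Finset

theorem sum_Icc_two_sub_telescope (f : ℤ → ℝ) {k : ℕ} (hk : 1 ≤ k) :
    ∑ i ∈ Icc 2 k, (f (i - 1) - f i) = f 1 - f k := by
  induction k, hk using Nat.le_induction with
  | base => simp
  | succ k hk ih =>
    rw [sum_Icc_succ_top (by omega), ih]
    push_cast
    rw [add_sub_cancel_right]
    ring

theorem abs_lt_of_eq_sum_weighted {x : ℤ → ℝ} {w : ℕ → ℝ} {k : ℕ} {n₀ : ℤ} {B : ℝ}
    (hw : ∀ i ∈ Icc 1 k, 0 ≤ w i) (hsum : ∑ i ∈ Icc 1 k, w i = 1)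
    (hrec : ∀ n, n₀ ≤ n → x n = ∑ i ∈ Icc 1 k, w i * x (n - i))
    (hinit : ∀ n, n₀ - k ≤ n → n < n₀ → |x n| < B) (n : ℤ) (hn : n₀ - k ≤ n) :
    |x n| < B := by
  induction n using Int.strongRec (m := n₀) with
  | lt n hlt => exact hinit n hn hlt
  | ge n hge ih =>
    obtain ⟨j, hj, hwj⟩ : ∃ j ∈ Icc 1 k, 0 < w j :=
      exists_lt_of_sum_lt (by simp [hsum] : ∑ i ∈ Icc 1 k, (0 : ℝ) < ∑ i ∈ Icc 1 k, w i)
    have hprev : ∀ i ∈ Icc 1 k, |x (n - i)| < B := fun i hi => by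
      rw [mem_Icc] at hi
      exact ih _ (by omega) (by omega)
    calc |x n| = |∑ i ∈ Icc 1 k, w i * x (n - i)| := by rw [← hrec n hge]
      _ ≤ ∑ i ∈ Icc 1 k, w i * |x (n - i)| := by
        refine (abs_sum_le_sum_abs _ _).trans_eq (sum_congr rfl fun i hi => ?_)
        rw [abs_mul, abs_of_nonneg (hw i hi)]
      _ < ∑ i ∈ Icc 1 k, w i * B :=
        sum_lt_sum (fun i hi => mul_le_mul_of_nonneg_left (hprev i hi).le (hw i hi))
          ⟨j, hj, mul_lt_mul_of_pos_left (hprev j hj) hwj⟩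
      _ = B := by rw [← sum_mul, hsum, one_mul]

noncomputable def pellResidual (k : ℕ) (x : ℤ → ℝ) (n : ℤ) : ℝ :=
  x n - 2 * x (n - 1) - ∑ i ∈ Icc 2 k, x (n - i)

/-- Coefficients of the recurrence with characteristic polynomial `(X - 1) p(X) / (X - α)`, where
`p` is the characteristic polynomial of `pellResidual` and `α` is a root of `p`. -/
noncomputable def deflatedWeight (k : ℕ) (α : ℝ) (i : ℕ) : ℝ :=
  if i = 1 then 3 - α else α ^ ((i : ℤ) - k - 1)

noncomputable def deflatedResidual (k : ℕ) (α : ℝ) (x : ℤ → ℝ) (n : ℤ) : ℝ :=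
  x n - ∑ i ∈ Icc 1 k, deflatedWeight k α i * x (n - i)

section Residuals

variable {k : ℕ} {α : ℝ}

theorem sum_Icc_one_deflatedWeight_mul (hk : 1 ≤ k) (f : ℕ → ℝ) :
    ∑ i ∈ Icc 1 k, deflatedWeight k α i * f i =
      (3 - α) * f 1 + ∑ i ∈ Icc 2 k, α ^ ((i : ℤ) - k - 1) * f i := by
  rw [← insert_Icc_add_one_left_eq_Icc hk, sum_insert (by simp)]
  refine congrArg₂ (· + ·) (by simp [deflatedWeight]) (sum_congr rfl fun i hi => ?_)
  rw [deflatedWeight, if_neg (by simp at hi; omega)]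

theorem deflatedResidual_succ_sub_mul (hk : 1 ≤ k) (hα0 : α ≠ 0)
    (hα : α ^ ((1 : ℤ) - k) = 3 * α - α ^ 2 - 1) (x : ℤ → ℝ) (n : ℤ) :
    deflatedResidual k α x (n + 1) - α * deflatedResidual k α x n =
      pellResidual k x (n + 1) - pellResidual k x n := by
  have hdefl : ∑ i ∈ Icc 2 k, α ^ ((i : ℤ) - k - 1) * x (n + 1 - i)
      - α * ∑ i ∈ Icc 2 k, α ^ ((i : ℤ) - k - 1) * x (n - i)
      = α ^ ((1 : ℤ) - k) * x (n - 1) - x (n - k) := by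
    rw [mul_sum, ← sum_sub_distrib]
    convert sum_Icc_two_sub_telescope (fun i => α ^ (i - k) * x (n - i)) hk using 2 with i
    · rw [show (i : ℤ) - 1 - k = i - k - 1 by ring, show n - ((i : ℤ) - 1) = n + 1 - i by ring,
        zpow_sub_one₀ hα0]
      field_simp
    · simp
  have hpell : ∑ i ∈ Icc 2 k, x (n + 1 - i) - ∑ i ∈ Icc 2 k, x (n - i) = x (n - 1) - x (n - k) := by
    rw [← sum_sub_distrib]
    convert sum_Icc_two_sub_telescope (fun i => x (n - i)) hk using 4 with i
    omega
  simp only [deflatedResidual, pellResidual, sum_Icc_one_deflatedWeight_mul hk, Nat.cast_one,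
    add_sub_cancel_right]
  rw [hα] at hdefl
  linear_combination hpell - hdefl

theorem pellResidual_sub_mul (x y : ℤ → ℝ) (c : ℝ) (n : ℤ) :
    pellResidual k (fun m => x m - c * y m) n = pellResidual k x n - c * pellResidual k y n := by
  simp only [pellResidual, sum_sub_distrib, ← mul_sum]
  ring

theorem deflatedResidual_sub_mul (x y : ℤ → ℝ) (c : ℝ) (n : ℤ) :
    deflatedResidual k α (fun m => x m - c * y m) n =
      deflatedResidual k α x n - c * deflatedResidual k α y n := by
  simp only [deflatedResidual, mul_sub, sum_sub_distrib, mul_sum, mul_left_comm c]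
  ring

theorem pellResidual_zpow_succ (hα0 : α ≠ 0) (n : ℤ) :
    pellResidual k (α ^ ·) (n + 1) = α * pellResidual k (α ^ ·) n := by
  simp only [pellResidual, mul_sub, mul_sum, mul_left_comm α, ← zpow_one_add₀ hα0]
  ring_nf

theorem deflatedResidual_zpow_succ (hα0 : α ≠ 0) (n : ℤ) :
    deflatedResidual k α (α ^ ·) (n + 1) = α * deflatedResidual k α (α ^ ·) n := by
  simp only [deflatedResidual, mul_sub, mul_sum, mul_left_comm α, ← zpow_one_add₀ hα0]
  ring_nf

theorem sum_deflatedWeight (hk : 1 ≤ k) (hα0 : α ≠ 0) (hα1 : α ≠ 1)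
    (hα : α ^ ((1 : ℤ) - k) = 3 * α - α ^ 2 - 1) :
    ∑ i ∈ Icc 1 k, deflatedWeight k α i = 1 := by
  have h := deflatedResidual_succ_sub_mul hk hα0 hα (fun _ => 1) 0
  simp only [deflatedResidual, pellResidual, mul_one, sub_self] at h
  have : (1 - α) * (1 - ∑ i ∈ Icc 1 k, deflatedWeight k α i) = 0 := by linear_combination h
  linarith [(mul_eq_zero.1 this).resolve_left (sub_ne_zero.2 hα1.symm)]

theorem deflatedWeight_nonneg (hα : 0 < α) (hα3 : α ≤ 3) (i : ℕ) :
    0 ≤ deflatedWeight k α i := by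
  unfold deflatedWeight
  split_ifs
  · linarith
  · positivity

theorem pellResidual_zpow (hk : 1 ≤ k) (hα0 : α ≠ 0) (hα1 : α ≠ 1)
    (hα : α ^ ((1 : ℤ) - k) = 3 * α - α ^ 2 - 1) (n : ℤ) :
    pellResidual k (α ^ ·) n = 0 := by
  have h := deflatedResidual_succ_sub_mul hk hα0 hα (α ^ ·) n
  rw [deflatedResidual_zpow_succ hα0, pellResidual_zpow_succ hα0, sub_self] at h
  have : (α - 1) * pellResidual k (α ^ ·) n = 0 := by linear_combination -h
  exact (mul_eq_zero.1 this).resolve_left (sub_ne_zero.2 hα1)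

theorem deflatedResidual_eq_zero {x : ℤ → ℝ} {n₀ : ℤ} (hk : 1 ≤ k) (hα0 : α ≠ 0)
    (hα : α ^ ((1 : ℤ) - k) = 3 * α - α ^ 2 - 1)
    (hrec : ∀ n, n₀ ≤ n → pellResidual k x n = 0) (hstart : deflatedResidual k α x n₀ = 0) :
    ∀ n, n₀ ≤ n → deflatedResidual k α x n = 0 := by
  intro n hn
  induction n, hn using Int.leInduction with
  | base => exact hstart
  | succ n hn ih =>
    have h := deflatedResidual_succ_sub_mul hk hα0 hα x n
    rw [hrec n hn, hrec (n + 1) (by omega), ih] at h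
    linarith

end Residuals

section PellRoot

variable {k : ℕ} {α : ℝ}

theorem pow_pred_mul_of_pellRoot (hk : 1 ≤ k)
    (hroot : α ^ k - 2 * α ^ (k - 1) - ∑ i ∈ range (k - 1), α ^ i = 0) :
    α ^ (k - 1) * (3 * α - α ^ 2 - 1) = 1 := by
  obtain ⟨m, rfl⟩ : ∃ m, k = m + 1 := ⟨k - 1, by omega⟩
  rw [add_tsub_cancel_right, pow_succ] at hroot
  rw [add_tsub_cancel_right]
  linear_combination (1 - α) * hroot - geom_sum_mul α m

theorem zpow_one_sub_of_pellRoot (hk : 1 ≤ k)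
    (hroot : α ^ k - 2 * α ^ (k - 1) - ∑ i ∈ range (k - 1), α ^ i = 0) :
    α ^ ((1 : ℤ) - k) = 3 * α - α ^ 2 - 1 := by
  rw [show (1 : ℤ) - k = -((k - 1 : ℕ) : ℤ) by omega, zpow_neg, zpow_natCast]
  exact inv_eq_of_mul_eq_one_right (pow_pred_mul_of_pellRoot hk hroot)

theorem two_lt_of_pellRoot (hk : 2 ≤ k) (hα : 0 < α)
    (hroot : α ^ k - 2 * α ^ (k - 1) - ∑ i ∈ range (k - 1), α ^ i = 0) : 2 < α := by
  have hsum : 1 ≤ ∑ i ∈ range (k - 1), α ^ i := by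
    simpa using single_le_sum (fun i _ => (pow_pos hα i).le) (mem_range.2 (by omega : 0 < k - 1))
  have hpow : α ^ k = α ^ (k - 1) * α := by rw [← pow_succ, Nat.sub_add_cancel (by omega)]
  have : 0 < α ^ (k - 1) * (α - 2) := by linarith
  exact sub_pos.1 (pos_of_mul_pos_right this (pow_pos hα _).le)

theorem lt_three_of_pow_pred_mul (hα : 0 < α) (h : α ^ (k - 1) * (3 * α - α ^ 2 - 1) = 1) :
    α < 3 := by
  have : 0 < 3 * α - α ^ 2 - 1 := pos_of_mul_pos_right (h ▸ one_pos) (pow_pos hα _).le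
  nlinarith

theorem pred_lt_pow_pred (hk : 1 ≤ k) (hα : 2 < α) : (k : ℝ) - 1 < α ^ (k - 1) := by
  have h := one_add_mul_le_pow (a := α - 1) (by linarith) (k - 1)
  rw [add_sub_cancel, Nat.cast_sub hk, Nat.cast_one] at h
  have hk' : (1 : ℝ) ≤ k := by exact_mod_cast hk
  nlinarith

end PellRoot

noncomputable def pellGDenom (k : ℕ) (z : ℝ) : ℝ :=
  ((k : ℝ) + 1) * z ^ 2 - 3 * (k : ℝ) * z + (k : ℝ) - 1

noncomputable def pellG (k : ℕ) (z : ℝ) : ℝ := (z - 1) / pellGDenom k z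

section DominantCoefficient

variable {k : ℕ} {α : ℝ}

theorem pellGDenom_eq_mul_sub :
    pellGDenom k α = α * (2 * α - 3) - ((k : ℝ) - 1) * (3 * α - α ^ 2 - 1) := by
  rw [pellGDenom]; ring

theorem pellGDenom_gt (hk : 1 ≤ k) (hα : 2 < α) (h : α ^ (k - 1) * (3 * α - α ^ 2 - 1) = 1) :
    α * (2 * α - 3) - 1 < pellGDenom k α := by
  have ht := pred_lt_pow_pred hk hα
  have hu : 0 < 3 * α - α ^ 2 - 1 := pos_of_mul_pos_right (h ▸ one_pos) (by positivity)
  rw [pellGDenom_eq_mul_sub]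
  nlinarith

theorem dominantCoeff_mul_pellGDenom (hD : pellGDenom k α ≠ 0) :
    (2 * α - 2) * pellG k α * pellGDenom k α = 2 * (α - 1) ^ 2 := by
  rw [pellG]; field_simp

theorem dominantCoeff_pos_and_mul_lt_four (hα2 : 2 < α) (hα3 : α < 3)
    (hD : α * (2 * α - 3) - 1 < pellGDenom k α) :
    0 < (2 * α - 2) * pellG k α ∧ (2 * α - 2) * pellG k α * α < 4 := by
  have hDpos : 0 < pellGDenom k α := by nlinarith
  have hc := dominantCoeff_mul_pellGDenom hDpos.ne'
  refine ⟨pos_of_mul_pos_left (by rw [hc]; nlinarith) hDpos.le, lt_of_mul_lt_mul_right ?_ hDpos.le⟩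
  -- `2α(α - 1)² ≤ 4(α(2α - 3) - 1)` amounts to `(α - 2)(α² - 4α - 1) ≤ 0`
  nlinarith [mul_pos (sub_pos.2 hα2) (by nlinarith : 0 < 1 + 4 * α - α ^ 2)]

end DominantCoefficient

section InitialData

variable {k : ℕ} {α : ℝ} {q : ℤ → ℝ}

theorem sum_Icc_two_mul_apply_two_sub (hk : 2 ≤ k)
    (hinit : ∀ n : ℤ, 2 - (k : ℤ) ≤ n → n ≤ -1 → q n = 0) (h0 : q 0 = 2) (f : ℕ → ℝ) :
    ∑ i ∈ Icc 2 k, f i * q (2 - i) = 2 * f 2 := by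
  rw [sum_eq_single_of_mem 2 (by simp [hk])]
  · simp [h0, mul_comm]
  · intro i hi hi2
    rw [mem_Icc] at hi
    rw [hinit _ (by omega) (by omega), mul_zero]

theorem deflatedResidual_two_of_init (hk : 2 ≤ k)
    (hinit : ∀ n : ℤ, 2 - (k : ℤ) ≤ n → n ≤ -1 → q n = 0) (h0 : q 0 = 2) (h1 : q 1 = 2)
    (hrec : pellResidual k q 2 = 0) :
    deflatedResidual k α q 2 = 2 * α - 2 * α ^ ((1 : ℤ) - k) := by
  have hsum := sum_Icc_two_mul_apply_two_sub hk hinit h0 (fun _ => 1)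
  simp only [one_mul] at hsum
  have hq2 : q 2 = 6 := by
    rw [pellResidual, hsum, show (2 : ℤ) - 1 = 1 by norm_num, h1] at hrec
    linarith
  rw [deflatedResidual, sum_Icc_one_deflatedWeight_mul (by omega) (fun i => q (2 - i)),
    sum_Icc_two_mul_apply_two_sub hk hinit h0, hq2]
  norm_num [h1]
  rw [show (2 : ℤ) - k - 1 = 1 - k by ring]
  ring

theorem deflatedResidual_zpow_two (hk : 1 ≤ k) (hα0 : α ≠ 0) :
    deflatedResidual k α (α ^ ·) 2 = α * (2 * α - 3) - ((k : ℝ) - 1) * α ^ ((1 : ℤ) - k) := by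
  have hterm : ∀ i ∈ Icc 2 k, α ^ ((i : ℤ) - k - 1) * α ^ ((2 : ℤ) - i) = α ^ ((1 : ℤ) - k) :=
    fun i _ => by rw [← zpow_add₀ hα0]; ring_nf
  rw [deflatedResidual, sum_Icc_one_deflatedWeight_mul hk (fun i => α ^ ((2 : ℤ) - i)),
    sum_congr rfl hterm, sum_const, Nat.card_Icc, nsmul_eq_mul, Nat.cast_sub (by omega)]
  norm_num
  ring

theorem abs_sub_mul_zpow_lt_two_of_init {c : ℝ}
    (hinit : ∀ n : ℤ, 2 - (k : ℤ) ≤ n → n ≤ -1 → q n = 0) (h0 : q 0 = 2) (h1 : q 1 = 2) (hα : 2 < α) (hc : 0 < c) (hcα : c * α < 4) (n : ℤ)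
    (hn : 2 - (k : ℤ) ≤ n) (hn2 : n < 2) : |q n - c * α ^ n| < 2 := by
  rcases (by omega : n ≤ -1 ∨ n = 0 ∨ n = 1) with hneg | rfl | rfl
  · have hpow : α ^ n ≤ α⁻¹ := zpow_neg_one α ▸ zpow_le_zpow_right₀ (by linarith) hneg
    have hcinv : c * α⁻¹ < 2 := by
      rw [← div_eq_mul_inv, div_lt_iff₀ (by linarith)]
      nlinarith
    rw [hinit n hn hneg, zero_sub, abs_neg, abs_of_pos (by positivity)]
    nlinarith
  · rw [h0, zpow_zero, abs_lt]
    constructor <;> nlinarith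
  · rw [h1, zpow_one, abs_lt]
    constructor <;> nlinarith

end InitialData

theorem abs_sub_dominant_lt_two {k : ℕ} {α : ℝ} {q : ℤ → ℝ} (hk : 2 ≤ k) (hα : 0 < α)
    (hroot : α ^ k - 2 * α ^ (k - 1) - ∑ i ∈ range (k - 1), α ^ i = 0)
    (hinit : ∀ n : ℤ, 2 - (k : ℤ) ≤ n → n ≤ -1 → q n = 0) (h0 : q 0 = 2) (h1 : q 1 = 2)
    (hrec : ∀ n : ℤ, 2 ≤ n → pellResidual k q n = 0) (n : ℤ) (hn : 2 - (k : ℤ) ≤ n) :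
    |q n - (2 * α - 2) * pellG k α * α ^ n| < 2 := by
  have hk1 : 1 ≤ k := by omega
  have hα0 : α ≠ 0 := hα.ne'
  have hα2 := two_lt_of_pellRoot hk hα hroot
  have hα1 : α ≠ 1 := by linarith
  have ht := pow_pred_mul_of_pellRoot hk1 hroot
  have hu := zpow_one_sub_of_pellRoot hk1 hroot
  have hα3 := lt_three_of_pow_pred_mul hα ht
  have hD := pellGDenom_gt hk1 hα2 ht
  obtain ⟨hc, hcα⟩ := dominantCoeff_pos_and_mul_lt_four hα2 hα3 hD
  set c := (2 * α - 2) * pellG k α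
  set E : ℤ → ℝ := fun m => q m - c * α ^ m
  have hE_rec : ∀ m, 2 ≤ m → pellResidual k E m = 0 := fun m hm => by
    rw [pellResidual_sub_mul, hrec m hm, pellResidual_zpow hk1 hα0 hα1 hu, mul_zero, sub_zero]
  have hE_two : deflatedResidual k α E 2 = 0 := by
    rw [deflatedResidual_sub_mul, deflatedResidual_two_of_init hk hinit h0 h1 (hrec 2 le_rfl),
      deflatedResidual_zpow_two hk1 hα0, hu, ← pellGDenom_eq_mul_sub]
    linear_combination -dominantCoeff_mul_pellGDenom (ne_of_gt (by nlinarith) : pellGDenom k α ≠ 0)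
  have hE_defl := deflatedResidual_eq_zero hk1 hα0 hu hE_rec hE_two
  exact abs_lt_of_eq_sum_weighted (fun i _ => deflatedWeight_nonneg hα hα3.le i)
    (sum_deflatedWeight hk1 hα0 hα1 hu) (fun m hm => sub_eq_zero.1 (hE_defl m hm))
    (abs_sub_mul_zpow_lt_two_of_init hinit h0 h1 hα2 hc hcα) n hn

/-- For every integer k ≥ 2 and every integer n ≥ 2 - k,
`|Q_n^{(k)} - (2α - 2) g_k(α) α^n| < 2`, where α is the unique positive real root of
`x^k - 2x^(k-1) - ⋯ - x - 1` and `g_k(z) = (z - 1)/((k+1)z² - 3kz + k - 1)`. -/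
theorem pellLucas_dominant_term_estimate (k : ℕ) (hk : 2 ≤ k)
    (Q : ℤ → ℤ)
    (hQinit : ∀ n : ℤ, 2 - (k : ℤ) ≤ n → n ≤ -1 → Q n = 0)
    (hQ0 : Q 0 = 2) (hQ1 : Q 1 = 2)
    (hQrec : ∀ n : ℤ, 2 ≤ n →
      Q n = 2 * Q (n - 1) + ∑ i ∈ Finset.Icc 2 k, Q (n - (i : ℤ)))
    (α : ℝ) (hαpos : 0 < α)
    (hαroot : α ^ k - 2 * α ^ (k - 1) - ∑ i ∈ Finset.range (k - 1), α ^ i = 0) :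
    ∀ n : ℤ, 2 - (k : ℤ) ≤ n →
      |(Q n : ℝ) - (2 * α - 2) *
        ((α - 1) / (((k : ℝ) + 1) * α ^ 2 - 3 * (k : ℝ) * α + (k : ℝ) - 1)) *
        α ^ n| < 2 := by
  have hrec : ∀ n : ℤ, 2 ≤ n → pellResidual k (fun m => (Q m : ℝ)) n = 0 := fun n hn => by
    rw [pellResidual, hQrec n hn]
    push_cast
    ring
  exact abs_sub_dominant_lt_two hk hαpos hαroot (fun n h₁ h₂ => by simp [hQinit n h₁ h₂])
    (by simp [hQ0]) (by simp [hQ1]) hrec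
end

section
/- Let k > 510 be an integer, α the unique positive real root of x^k - 2x^{k-1} - ... - x - 1, and λ = φ² - α with φ = (1+√5)/2. Then 0 < λ < φ^{-(k-2)}. -/
set_option maxRecDepth 8000


/-- Let k > 510, α the unique positive real root of `x^k - 2x^(k-1) - ⋯ - x - 1`,
and λ = φ² - α with φ = (1+√5)/2. Then `0 < λ < φ^(-(k-2))`. -/
theorem lambda_bounds (k : ℕ) (hk : 510 < k)
    (α : ℝ) (hαpos : 0 < α)
    (hαroot : α ^ k - 2 * α ^ (k - 1) - ∑ i ∈ Finset.range (k - 1), α ^ i = 0) :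
    0 < ((1 + Real.sqrt 5) / 2) ^ 2 - α ∧
    ((1 + Real.sqrt 5) / 2) ^ 2 - α < ((1 + Real.sqrt 5) / 2) ^ (-((k : ℤ) - 2)) := by
  obtain ⟨m, rfl⟩ : ∃ m, k = m + 2 := ⟨k - 2, by omega⟩
  have hm : 509 ≤ m := by omega
  have hk1 : m + 2 - 1 = m + 1 := by omega
  rw [hk1] at hαroot
  set s := Real.sqrt 5 with hs
  have hs2 : s ^ 2 = 5 := Real.sq_sqrt (by norm_num)
  have hs0 : 0 ≤ s := Real.sqrt_nonneg 5
  have hs_lb : 2 < s := by nlinarith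
  have hs_ub : s < 3 := by nlinarith
  set S := ∑ i ∈ Finset.range (m + 1), α ^ i with hSdef
  have hgeom : S * (α - 1) = α ^ (m + 1) - 1 := geom_sum_mul α (m + 1)
  have hP : 0 < α ^ (m + 1) := pow_pos hαpos _
  have hS1 : 1 ≤ S := by
    have h0 : α ^ 0 ≤ S := Finset.single_le_sum (f := fun i => α ^ i)
      (fun i _ => by positivity) (Finset.mem_range.mpr (by omega))
    simpa using h0
  have hα2 : 2 < α := by
    have h2 : α ^ (m + 1) * (α - 2) = S := by linear_combination hαroot
    by_contra h
    push_neg at h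
    nlinarith
  have hA : α ^ (m + 1) * (α ^ 2 - 3 * α + 1) = -1 := by
    linear_combination (α - 1) * hαroot + hgeom
  have hA2 : α ^ (m + 1) * (((3 + s) / 2 - α) * (α - (3 - s) / 2)) = 1 := by
    linear_combination -hA + α ^ (m + 1) / 4 * hs2
  have hβ : ((1 + s) / 2) ^ 2 = (3 + s) / 2 := by linear_combination hs2 / 4
  have hγ : 0 < α - (3 - s) / 2 := by linarith
  have hlampos : 0 < (3 + s) / 2 - α := by
    by_contra h
    push_neg at h
    nlinarith [hA2, mul_pos hP hγ]
  constructor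
  · rw [hβ]; exact hlampos
  · rw [hβ]
    have hcast : (((m + 2 : ℕ) : ℤ) - 2) = (m : ℤ) := by push_cast; ring
    rw [hcast, zpow_neg, zpow_natCast]
    have hφ1 : 1 < (1 + s) / 2 := by linarith
    have hφ2 : (1 + s) / 2 < 2 := by linarith
    have hφm : (0:ℝ) < ((1 + s) / 2) ^ m := by positivity
    have hden : ((1 + s) / 2) ^ m < α ^ (m + 1) * (α - (3 - s) / 2) := by
      have h1 : ((1 + s) / 2) ^ m < 2 ^ m :=
        pow_lt_pow_left₀ hφ2 (by positivity) (by omega)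
      have h2 : (2:ℝ) ^ m ≤ α ^ (m + 1) := by
        calc (2:ℝ) ^ m ≤ 2 ^ (m + 1) := pow_le_pow_right₀ (by norm_num) (by omega)
          _ ≤ α ^ (m + 1) := pow_le_pow_left₀ (by norm_num) hα2.le _
      have h3 : 1 < α - (3 - s) / 2 := by linarith
      calc ((1 + s) / 2) ^ m < 2 ^ m := h1
        _ ≤ α ^ (m + 1) := h2
        _ = α ^ (m + 1) * 1 := (mul_one _).symm
        _ < α ^ (m + 1) * (α - (3 - s) / 2) := mul_lt_mul_of_pos_left h3 hP
    rw [inv_eq_one_div, lt_div_iff₀ hφm]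
    nlinarith [mul_lt_mul_of_pos_left hden hlampos, hA2]
end

section
/- Let k > 510 be an integer and α the unique positive real root of x^k - 2x^{k-1} - ... - x - 1. With g_k(z) = (z - 1)/((k+1)z² - 3kz + k - 1) and φ = (1+√5)/2, we have |g_k(α) - g_k(φ²)| < 4k/φ^k. -/
private lemma aux_pow8 : ∀ k : ℕ, 6 ≤ k → 8 * k ≤ 2 ^ k := by
  intro k hk
  induction k, hk using Nat.le_induction with
  | base => norm_num
  | succ n hn ih =>
    have h8 : 8 ≤ 2 ^ n := le_trans (by omega) ih
    calc 8 * (n + 1) = 8 * n + 8 := by ring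
      _ ≤ 2 ^ n + 2 ^ n := by omega
      _ = 2 ^ (n + 1) := by ring

set_option maxHeartbeats 1600000 in
/-- Let k > 510 and α the unique positive real root of `x^k - 2x^(k-1) - ⋯ - x - 1`.
With `g_k(z) = (z - 1)/((k+1)z² - 3kz + k - 1)` and φ = (1+√5)/2, we have
`|g_k(α) - g_k(φ²)| < 4k/φ^k`. -/
theorem g_k_alpha_near_g_k_phi_sq (k : ℕ) (hk : 510 < k)
    (α : ℝ) (hαpos : 0 < α)
    (hαroot : α ^ k - 2 * α ^ (k - 1) - ∑ i ∈ Finset.range (k - 1), α ^ i = 0) :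
    |(α - 1) / (((k : ℝ) + 1) * α ^ 2 - 3 * (k : ℝ) * α + (k : ℝ) - 1)
      - (((1 + Real.sqrt 5) / 2) ^ 2 - 1) /
          (((k : ℝ) + 1) * ((1 + Real.sqrt 5) / 2) ^ 4
            - 3 * (k : ℝ) * ((1 + Real.sqrt 5) / 2) ^ 2 + (k : ℝ) - 1)|
      < 4 * (k : ℝ) / ((1 + Real.sqrt 5) / 2) ^ k := by
  have hk6 : 6 ≤ k := by omega
  have hs5 : Real.sqrt 5 ^ 2 = 5 := Real.sq_sqrt (by norm_num)
  have hs0 : (0:ℝ) ≤ Real.sqrt 5 := Real.sqrt_nonneg 5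
  set s := Real.sqrt 5 with hsdef
  have hslb : (2.2360 : ℝ) < s := by nlinarith
  have hsub : s < 2.2361 := by nlinarith
  set K := (k:ℝ) with hKdef
  have hK : (511:ℝ) ≤ K := by
    rw [hKdef]
    have h : 511 ≤ k := hk
    exact_mod_cast h
  have hKpos : (0:ℝ) < K := by linarith
  have hk1 : k - 1 + 1 = k := by omega
  have hpk : α ^ k = α ^ (k-1) * α := by rw [← pow_succ, hk1]
  rw [hpk] at hαroot
  have hβpos : (0:ℝ) < α ^ (k-1) := pow_pos hαpos _
  have hS1 : (1:ℝ) ≤ ∑ i ∈ Finset.range (k-1), α ^ i := by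
    have h0 : (0:ℕ) ∈ Finset.range (k-1) := Finset.mem_range.mpr (by omega)
    have := Finset.single_le_sum (f := fun i => α ^ i)
      (fun i _ => (pow_pos hαpos i).le) h0
    simpa using this
  have hα2 : 2 < α := by
    by_contra h
    push_neg at h
    have hnn : (0:ℝ) ≤ α ^ (k-1) * (2 - α) := mul_nonneg hβpos.le (by linarith)
    linarith [hαroot, hnn]
  have hgeom := geom_sum_mul α (k-1)
  have hE : α ^ (k-1) * (α^2 - 3*α + 1) = -1 := by
    linear_combination (α - 1) * hαroot + hgeom
  have hfact : α ^ (k-1) * (((3+s)/2 - α) * (α - (3-s)/2)) = 1 := by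
    linear_combination (-1 : ℝ) * hE + (α ^ (k-1) / 4) * hs5
  have hα2' : (0:ℝ) < α - (3-s)/2 := by linarith
  have hαub : α < (3+s)/2 := by
    by_contra h
    push_neg at h
    have h2 : ((3+s)/2 - α) * (α - (3-s)/2) ≤ 0 :=
      mul_nonpos_of_nonpos_of_nonneg (by linarith) hα2'.le
    linarith [hfact, mul_nonneg hβpos.le (neg_nonneg.mpr h2)]
  have hεpos : (0:ℝ) < (3+s)/2 - α := by linarith
  have h2k1pos : (0:ℝ) < 2 ^ (k-1) := by positivity
  have h2kpos : (0:ℝ) < (2:ℝ) ^ k := by positivity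
  have h2k : (2:ℝ) ^ k = 2 ^ (k-1) * 2 := by rw [← pow_succ, hk1]
  have hεb : ((3+s)/2 - α) * 2 ^ (k-1) ≤ 1 := by
    have h1 : (2:ℝ) ^ (k-1) ≤ α ^ (k-1) := pow_le_pow_left₀ (by norm_num) hα2.le _
    have h2 : (1:ℝ) ≤ α - (3-s)/2 := by linarith
    calc ((3+s)/2 - α) * 2 ^ (k-1)
        ≤ ((3+s)/2 - α) * α ^ (k-1) := mul_le_mul_of_nonneg_left h1 hεpos.le
      _ ≤ ((3+s)/2 - α) * α ^ (k-1) * (α - (3-s)/2) :=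
          le_mul_of_one_le_right (mul_nonneg hεpos.le hβpos.le) h2
      _ = 1 := by linear_combination hfact
  have hε2k : ((3+s)/2 - α) * 2 ^ k ≤ 2 := by
    calc ((3+s)/2 - α) * 2 ^ k = (((3+s)/2 - α) * 2 ^ (k-1)) * 2 := by rw [h2k]; ring
      _ ≤ 1 * 2 := by linarith
      _ = 2 := by norm_num
  have hεle : (3+s)/2 - α ≤ 2 / 2 ^ k := by
    rw [le_div_iff₀ h2kpos]; exact hε2k
  have h8k : 8 * K ≤ 2 ^ k := by
    rw [hKdef]
    have h := aux_pow8 k hk6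
    calc 8 * (k:ℝ) = ((8 * k : ℕ) : ℝ) := by push_cast; ring
      _ ≤ ((2 ^ k : ℕ) : ℝ) := by exact_mod_cast h
      _ = 2 ^ k := by push_cast; ring
  clear_value K
  -- rewrite the golden-ratio powers
  have hp2 : ((1+s)/2) ^ 2 = (3+s)/2 := by linear_combination hs5 / 4
  have hp4 : ((1+s)/2) ^ 4 = (7+3*s)/2 := by
    linear_combination ((s^2 + 4*s + 11)/16) * hs5
  rw [hp2, hp4]
  have hgd : (K+1) * ((7+3*s)/2) - 3*K*((3+s)/2) + K - 1 = (5+3*s)/2 := by ring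
  rw [hgd]
  set D1 := (K+1) * α ^ 2 - 3*K*α + K - 1 with hD1def
  set M := (K+1) * (α + (3+s)/2) - 3*K with hMdef
  clear_value D1 M
  have hαb : α < 2.6181 := by linarith
  have hMub : M ≤ 2.25 * K := by
    rw [hMdef]
    linarith [mul_lt_mul_of_pos_left hαb hKpos, mul_lt_mul_of_pos_left hsub hKpos]
  have hMlb : 1.6 * K ≤ M := by
    rw [hMdef]
    linarith [mul_lt_mul_of_pos_left hα2 hKpos, mul_lt_mul_of_pos_left hslb hKpos]
  have hMpos : (0:ℝ) < M := by linarith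
  have hεMle : ((3+s)/2 - α) * M ≤ 0.6 := by
    calc ((3+s)/2 - α) * M ≤ ((3+s)/2 - α) * (2.25 * K) :=
          mul_le_mul_of_nonneg_left hMub hεpos.le
      _ ≤ (2 / 2 ^ k) * (2.25 * K) :=
          mul_le_mul_of_nonneg_right hεle (by linarith)
      _ ≤ 0.6 := by
          rw [div_mul_eq_mul_div, div_le_iff₀ h2kpos]
          linarith
  have hident : D1 = (5+3*s)/2 - ((3+s)/2 - α) * M := by
    rw [hD1def, hMdef]
    linear_combination ((K+1)/4) * hs5
  have hD1lb : (5.2:ℝ) ≤ D1 := by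
    rw [hident]; linarith
  have hD1pos : (0:ℝ) < D1 := by linarith
  have hD2lb : (5.85:ℝ) ≤ (5+3*s)/2 := by linarith
  have hD2pos : (0:ℝ) < (5+3*s)/2 := by linarith
  have hsplit : (α - 1) / D1 - ((3+s)/2 - 1) / ((5+3*s)/2)
      = ((α - 1) * ((5+3*s)/2) - D1 * ((3+s)/2 - 1)) / (D1 * ((5+3*s)/2)) :=
    div_sub_div (α - 1) ((3+s)/2 - 1) hD1pos.ne' hD2pos.ne'
  rw [hsplit, abs_div, abs_of_pos (mul_pos hD1pos hD2pos)]
  have hnum_eq : (α - 1) * ((5+3*s)/2) - D1 * ((3+s)/2 - 1)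
      = ((3+s)/2 - α) * (((3+s)/2 - 1) * M - (5+3*s)/2) := by
    rw [hident]; ring
  have hfacl : 1.6 * M ≤ ((3+s)/2 - 1) * M :=
    mul_le_mul_of_nonneg_right (by linarith) hMpos.le
  have hfacu : ((3+s)/2 - 1) * M ≤ 1.62 * M :=
    mul_le_mul_of_nonneg_right (by linarith) hMpos.le
  have hfac_pos : (0:ℝ) < ((3+s)/2 - 1) * M - (5+3*s)/2 := by
    linarith [hfacl, hMlb]
  have hfac_ub : ((3+s)/2 - 1) * M - (5+3*s)/2 ≤ 4 * K := by
    linarith [hfacu, hMub]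
  have habs : |(α - 1) * ((5+3*s)/2) - D1 * ((3+s)/2 - 1)| ≤ ((3+s)/2 - α) * (4 * K) := by
    rw [hnum_eq, abs_of_pos (mul_pos hεpos hfac_pos)]
    exact mul_le_mul_of_nonneg_left hfac_ub hεpos.le
  have hφpos : (0:ℝ) < (1+s)/2 := by linarith
  have hφk : ((1+s)/2) ^ k < 2 ^ k := by
    apply pow_lt_pow_left₀ (by linarith) hφpos.le (by omega)
  rw [div_lt_div_iff₀ (mul_pos hD1pos hD2pos) (pow_pos hφpos k)]
  have h1 : |(α - 1) * ((5+3*s)/2) - D1 * ((3+s)/2 - 1)| * ((1+s)/2) ^ k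
      ≤ (((3+s)/2 - α) * (4 * K)) * 2 ^ k :=
    mul_le_mul habs hφk.le (pow_nonneg hφpos.le k) (by positivity)
  have h2 : (((3+s)/2 - α) * (4 * K)) * 2 ^ k = 4 * K * (((3+s)/2 - α) * 2 ^ k) := by ring
  have h3 : 4 * K * (((3+s)/2 - α) * 2 ^ k) ≤ 8 * K := by
    have h := mul_nonneg hKpos.le (sub_nonneg.mpr hε2k)
    linarith [h]
  have hDD : (30:ℝ) ≤ D1 * ((5+3*s)/2) := by
    have h := mul_le_mul hD1lb hD2lb (by norm_num : (0:ℝ) ≤ 5.85) (by linarith)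
    linarith
  have h4 : 8 * K < 4 * K * (D1 * ((5+3*s)/2)) := by
    have h := mul_le_mul_of_nonneg_left hDD (by linarith : (0:ℝ) ≤ 4 * K)
    linarith [h]
  calc |(α - 1) * ((5+3*s)/2) - D1 * ((3+s)/2 - 1)| * ((1+s)/2) ^ k
      ≤ 4 * K * (((3+s)/2 - α) * 2 ^ k) := by rw [← h2]; exact h1
    _ ≤ 8 * K := h3
    _ < 4 * K * (D1 * ((5+3*s)/2)) := h4
end

section
/- For all real x with 0 < x < 0.906, the inequality log(1 - x) ≥ -φ² x holds, where φ² = (3 + √5)/2. -/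
/-- For all real x with 0 < x < 0.906, `log(1 - x) ≥ -φ² x` holds,
where φ² = (3 + √5)/2. -/
theorem log_one_sub_ge (x : ℝ) (hx0 : 0 < x) (hx1 : x < 0.906) :
    Real.log (1 - x) ≥ -((3 + Real.sqrt 5) / 2) * x := by
  set t : ℝ := x / 0.906 with ht
  have ht0 : 0 < t := by positivity
  have ht1 : t < 1 := by rw [ht, div_lt_one (by norm_num)]; exact hx1
  -- numeric bound on sqrt 5
  have h5 : (2.236:ℝ) ≤ Real.sqrt 5 := by
    rw [show (2.236:ℝ) = Real.sqrt (2.236^2) from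
      (Real.sqrt_sq (by norm_num)).symm]
    exact Real.sqrt_le_sqrt (by norm_num)
  -- key numeric fact: log 0.094 ≥ -(0.906 * (3+√5)/2)
  have hkey : -(0.906 * ((3 + Real.sqrt 5) / 2)) ≤ Real.log 0.094 := by
    rw [Real.le_log_iff_exp_le (by norm_num)]
    have h1 : -(0.906 * ((3 + Real.sqrt 5) / 2)) ≤ -2.371908 := by linarith
    have h2 : Real.exp (-(0.906 * ((3 + Real.sqrt 5) / 2))) ≤ Real.exp (-2.371908) :=
      Real.exp_le_exp.mpr h1
    have h3 : (10.6383 : ℝ) ≤ Real.exp 2.371908 := by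
      have e1 : (2.7182818283 : ℝ) < Real.exp 1 := Real.exp_one_gt_d9
      have e2 : (2.7182818283 : ℝ)^2 ≤ Real.exp 2 := by
        have : Real.exp 2 = Real.exp 1 ^ 2 := by
          rw [← Real.exp_nat_mul]; norm_num
        rw [this]
        exact pow_le_pow_left₀ (by norm_num) (le_of_lt e1) 2
      have e3 : (1.02324425 : ℝ)^16 ≤ Real.exp 0.371908 := by
        have : Real.exp 0.371908 = Real.exp 0.02324425 ^ 16 := by
          rw [← Real.exp_nat_mul]; norm_num
        rw [this]
        refine pow_le_pow_left₀ (by norm_num) ?_ 16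
        have := Real.add_one_le_exp (0.02324425 : ℝ)
        linarith
      have e4 : Real.exp 2.371908 = Real.exp 2 * Real.exp 0.371908 := by
        rw [← Real.exp_add]; norm_num
      rw [e4]
      calc (10.6383 : ℝ) ≤ (2.7182818283:ℝ)^2 * (1.02324425:ℝ)^16 := by norm_num
        _ ≤ Real.exp 2 * Real.exp 0.371908 :=
          mul_le_mul e2 e3 (by positivity) (le_of_lt (Real.exp_pos 2))
    have h4 : Real.exp (-2.371908) ≤ 0.094 := by
      rw [Real.exp_neg]
      rw [inv_le_iff_one_le_mul₀ (Real.exp_pos _)]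
      nlinarith [Real.exp_pos (2.371908 : ℝ)]
    linarith
  -- concavity of log: chord lower bound
  have hconc := strictConcaveOn_log_Ioi.concaveOn.2
    (Set.mem_Ioi.mpr (by norm_num : (0:ℝ) < 1))
    (Set.mem_Ioi.mpr (by norm_num : (0:ℝ) < 0.094))
    (by linarith : (0:ℝ) ≤ 1 - t) (le_of_lt ht0) (by ring)
  simp only [smul_eq_mul, mul_one, Real.log_one] at hconc
  have harg : 1 - t + t * 0.094 = 1 - x := by
    rw [ht]; field_simp; ring
  rw [harg] at hconc
  have hx906 : x = 0.906 * t := by rw [ht]; field_simp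
  calc Real.log (1 - x) ≥ (1 - t) * 0 + t * Real.log 0.094 := by
        simpa using hconc
    _ = t * Real.log 0.094 := by ring
    _ ≥ t * (-(0.906 * ((3 + Real.sqrt 5) / 2))) := by
        exact mul_le_mul_of_nonneg_left hkey (le_of_lt ht0)
    _ = -((3 + Real.sqrt 5) / 2) * x := by rw [hx906]; ring
end

section
/- Suppose n, m, y, k are positive integers with k ≥ 2, y ≥ 2, m ≥ 2, 1 ≤ n ≤ k, and Q_n^{(k)} = y^m (so that 2F_{2n} = y^m). Then 2 ≤ y ≤ 100 implies (n, m, y) = (3, 2, 4) or (n, m, y) = (3, 4, 2). -/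
/-!
For `3 ≤ j ≤ k` the term that leaves the window of the recurrence is one of the initial zeros,
so `Q_j = 3 Q_{j-1} - Q_{j-2}`, the recurrence of `2 F_{2j}`; hence `Q_n = 2 F_{2n}`.
As `y` is even, `2 ^ (m - 1) ∣ F_{2n}`. But the 2-adic valuation of `F_N` is at most
`v₂(N) + 2`: an odd cofactor `s` leaves `v_p(F_{ts})` unchanged because
`F_{ts} ≡ s F_t F_{t-1}^{s-1} [MOD F_t²]`, and each doubling beyond `F_6 = 8` adds exactly one.
Hence `2 ^ (m - 4) ∣ n`, while `2 ^ n ≤ 2 F_{2n} = y ^ m < 2 ^ (7m)` gives `n < 7m`. Together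
these force `m ≤ 10`, and the remaining finitely many cases are checked by computation.
-/

open Nat Finset

namespace Nat

theorem fib_mul_add_one_modEq (t s : ℕ) : fib (t * s + 1) ≡ fib (t + 1) ^ s [MOD fib t] := by
  induction s with
  | zero => simp [ModEq.refl]
  | succ s ih =>
    have hdvd : fib (t * s) * fib t ≡ 0 [MOD fib t] := modEq_zero_iff_dvd.2 (dvd_mul_left _ _)
    calc fib (t * (s + 1) + 1) = fib (t * s) * fib t + fib (t * s + 1) * fib (t + 1) := by
          rw [mul_add_one, fib_add]
      _ ≡ 0 + fib (t + 1) ^ s * fib (t + 1) [MOD fib t] := hdvd.add (ih.mul_right _)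
      _ = fib (t + 1) ^ (s + 1) := by ring

theorem fib_succ_mul_succ_modEq (t s : ℕ) :
    fib ((t + 1) * (s + 1)) ≡ (s + 1) * fib (t + 1) * fib t ^ s [MOD fib (t + 1) ^ 2] := by
  induction s with
  | zero => simp [ModEq.refl]
  | succ s ih =>
    have hnext : fib ((t + 1) * (s + 1) + 1) * fib (t + 1) ≡ fib t ^ (s + 1) * fib (t + 1)
        [MOD fib (t + 1) ^ 2] := by
      have hsucc : fib (t + 2) ≡ fib t [MOD fib (t + 1)] := by
        rw [fib_add_two]
        exact add_modEq_right
      rw [sq]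
      exact ((fib_mul_add_one_modEq (t + 1) (s + 1)).trans (hsucc.pow _)).mul_right' _
    calc fib ((t + 1) * (s + 1 + 1))
        = fib ((t + 1) * (s + 1)) * fib t + fib ((t + 1) * (s + 1) + 1) * fib (t + 1) := by
          rw [← fib_add, mul_add_one (t + 1) (s + 1), add_assoc]
      _ ≡ (s + 1) * fib (t + 1) * fib t ^ s * fib t + fib t ^ (s + 1) * fib (t + 1)
          [MOD fib (t + 1) ^ 2] := (ih.mul_right _).add hnext
      _ = (s + 1 + 1) * fib (t + 1) * fib t ^ (s + 1) := by ring

theorem padicValNat_fib_mul_of_not_dvd {p t s : ℕ} [hp : Fact p.Prime] (hpt : p ∣ fib t)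
    (hps : ¬p ∣ s) : padicValNat p (fib (t * s)) = padicValNat p (fib t) := by
  obtain _ | s := s
  · exact absurd (dvd_zero p) hps
  obtain _ | t := t
  · simp
  have hFt : fib (t + 1) ≠ 0 := (fib_pos.2 t.succ_pos).ne'
  have hFts : fib ((t + 1) * (s + 1)) ≠ 0 := (fib_pos.2 (by positivity)).ne'
  refine le_antisymm ?_ ((padicValNat_dvd_iff_le hFts).1
    (pow_padicValNat_dvd.trans (fib_dvd _ _ (dvd_mul_right _ _))))
  set c := padicValNat p (fib (t + 1))
  by_contra! hlt
  have hc : 1 ≤ c := one_le_padicValNat_of_dvd hFt hpt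
  have hsq : p ^ (c + 1) ∣ fib (t + 1) ^ 2 :=
    (pow_dvd_pow p (by omega : c + 1 ≤ c * 2)).trans
      (pow_mul p c 2 ▸ pow_dvd_pow_of_dvd pow_padicValNat_dvd 2)
  have hprod : p ^ (c + 1) ∣ fib (t + 1) * ((s + 1) * fib t ^ s) := by
    have := ((fib_succ_mul_succ_modEq t s).dvd_iff hsq).1 ((padicValNat_dvd_iff_le hFts).2 hlt)
    rwa [mul_comm (s + 1), mul_assoc] at this
  have hpred : ¬p ∣ fib t := fun h ↦
    hp.out.one_lt.ne' (eq_one_of_dvd_coprimes (fib_coprime_fib_succ t) h hpt)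
  have hcop : Coprime (p ^ (c + 1)) ((s + 1) * fib t ^ s) :=
    Coprime.pow_left _ (Coprime.mul_right ((Prime.coprime_iff_not_dvd hp.out).2 hps)
      (((Prime.coprime_iff_not_dvd hp.out).2 hpred).pow_right _))
  exact pow_succ_padicValNat_not_dvd hFt (hcop.dvd_of_dvd_mul_right hprod)

theorem padicValNat_two_fib_two_mul {t : ℕ} (ht : t ≠ 0) (h4 : 4 ∣ fib t) :
    padicValNat 2 (fib (2 * t)) = padicValNat 2 (fib t) + 1 := by
  obtain ⟨a, ha⟩ := h4
  have hodd : ¬2 ∣ fib (t + 1) := fun h ↦ by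
    have := eq_one_of_dvd_coprimes (fib_coprime_fib_succ t)
      (ha ▸ dvd_mul_of_dvd_left (by norm_num) a) h
    omega
  have hle : fib t ≤ fib (t + 1) := fib_le_fib_succ
  have hsplit : 2 * fib (t + 1) - fib t = 2 * (fib (t + 1) - 2 * a) := by omega
  rw [fib_two_mul, hsplit, padicValNat.mul (fib_pos.2 (pos_of_ne_zero ht)).ne' (by omega),
    padicValNat.mul two_ne_zero (by omega), padicValNat.self one_lt_two,
    padicValNat.eq_zero_of_not_dvd (n := fib (t + 1) - 2 * a) (by omega)]

theorem padicValNat_two_fib_six_mul_two_pow (j : ℕ) :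
    padicValNat 2 (fib (6 * 2 ^ j)) = j + 3 := by
  induction j with
  | zero =>
    rw [show fib (6 * 2 ^ 0) = 2 ^ 3 by decide]
    exact padicValNat.prime_pow 3
  | succ j ih =>
    have h4 : 4 ∣ fib (6 * 2 ^ j) :=
      (pow_dvd_pow 2 (by omega : 2 ≤ j + 3)).trans (ih ▸ pow_padicValNat_dvd)
    rw [pow_succ, mul_comm _ 2, ← mul_assoc, mul_comm 6, mul_assoc,
      padicValNat_two_fib_two_mul (by positivity) h4, ih]

theorem three_dvd_of_two_dvd_fib {N : ℕ} (h : 2 ∣ fib N) : 3 ∣ N := by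
  have hgcd : fib (gcd N 3) = 2 := by
    rw [fib_gcd]
    exact gcd_eq_right h
  rcases (dvd_prime prime_three).1 (gcd_dvd_right N 3) with h1 | h3
  · simp [h1] at hgcd
  · exact h3 ▸ gcd_dvd_left N 3

theorem padicValNat_two_fib_le (N : ℕ) : padicValNat 2 (fib N) ≤ padicValNat 2 N + 2 := by
  by_cases h2 : 2 ∣ fib N
  swap
  · simp [padicValNat.eq_zero_of_not_dvd h2]
  obtain ⟨r, rfl⟩ := three_dvd_of_two_dvd_fib h2
  obtain rfl | hr := r.eq_zero_or_pos
  · simp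
  obtain ⟨e, s, hs, rfl⟩ := exists_eq_pow_mul_and_not_dvd hr.ne' 2 (by norm_num)
  cases e with
  | zero =>
    rw [pow_zero, one_mul, padicValNat_fib_mul_of_not_dvd (by decide) hs,
      show fib 3 = 2 by decide, padicValNat.self one_lt_two]
    omega
  | succ j =>
    have hN : 3 * (2 ^ (j + 1) * s) = 6 * 2 ^ j * s := by ring
    have h2 : 2 ∣ fib (6 * 2 ^ j) :=
      (by decide : 2 ∣ fib 3).trans (fib_dvd 3 _ ⟨2 * 2 ^ j, by ring⟩)
    rw [hN, padicValNat_fib_mul_of_not_dvd h2 hs, padicValNat_two_fib_six_mul_two_pow]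
    have : j + 1 ≤ padicValNat 2 (6 * 2 ^ j * s) :=
      (padicValNat_dvd_iff_le (by rw [← hN]; omega)).1 ⟨3 * s, by ring⟩
    omega

theorem two_pow_le_fib_two_mul_add_two (n : ℕ) : 2 ^ n ≤ fib (2 * n + 2) := by
  induction n with
  | zero => simp
  | succ n ih =>
    have h : fib (2 * n + 2) ≤ fib (2 * n + 2 + 1) := fib_le_fib_succ
    rw [show 2 * (n + 1) + 2 = 2 * n + 2 + 2 by ring, fib_add_two, pow_succ]
    omega

theorem fib_add_four_add_fib_s18 (n : ℕ) : fib (n + 4) + fib n = 3 * fib (n + 2) := by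
  simp only [fib_add_two]
  ring

end Nat

theorem Finset.sum_Icc_comp_sub_eq {G : Type*} [AddCommGroup G] (f : ℤ → G) (j : ℤ)
    {a k : ℕ} (hak : a ≤ k) :
    ∑ i ∈ Icc a k, f (j - i) =
      ∑ i ∈ Icc a k, f (j - 1 - i) + f (j - a) - f (j - 1 - k) := by
  induction k, hak using Nat.le_induction with
  | base => simp
  | succ k hak ih =>
    rw [sum_Icc_succ_top (by omega), sum_Icc_succ_top (by omega), ih]
    push_cast
    rw [show j - (k + 1 : ℤ) = j - 1 - k by ring]
    abel

structure IsPellLucas (k : ℕ) (Q : ℤ → ℤ) : Prop where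
  init : ∀ j : ℤ, 2 - (k : ℤ) ≤ j → j ≤ -1 → Q j = 0
  zero : Q 0 = 2
  one : Q 1 = 2
  step : ∀ j : ℤ, 2 ≤ j → Q j = 2 * Q (j - 1) + ∑ i ∈ Icc 2 k, Q (j - (i : ℤ))

namespace IsPellLucas

variable {k : ℕ} {Q : ℤ → ℤ}

theorem eq_three_mul_sub (hQ : IsPellLucas k Q) {j : ℤ} (hj : 3 ≤ j) (hjk : j ≤ k) :
    Q j = 3 * Q (j - 1) - Q (j - 2) := by
  have hsum := sum_Icc_comp_sub_eq Q j (a := 2) (k := k) (by omega)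
  rw [Nat.cast_ofNat] at hsum
  have hzero := hQ.init (j - 1 - k) (by omega) (by omega)
  have hj1 := hQ.step (j - 1) (by omega)
  rw [show j - 1 - 1 = j - 2 by ring] at hj1
  rw [hQ.step j (by omega)]
  linarith

theorem apply_two (hQ : IsPellLucas k Q) (hk : 2 ≤ k) : Q 2 = 6 := by
  have hsum : ∑ i ∈ Icc 2 k, Q (2 - i) = Q 0 := by
    rw [sum_eq_single_of_mem 2 (by simp [hk])]
    · simp
    · intro i hi hi2
      simp only [mem_Icc] at hi
      exact hQ.init _ (by omega) (by omega)
  rw [hQ.step 2 le_rfl, hsum, hQ.zero, show (2 : ℤ) - 1 = 1 by norm_num, hQ.one]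
  norm_num

theorem eq_two_mul_fib (hQ : IsPellLucas k Q) :
    ∀ j : ℕ, 1 ≤ j → j ≤ k → Q j = 2 * fib (2 * j)
  | 1, _, _ => by simp [hQ.one]
  | 2, _, hk => by simp [hQ.apply_two hk, show fib 4 = 3 by decide]
  | j + 3, _, hjk => by
    have h1 := hQ.eq_two_mul_fib (j + 1) (by omega) (by omega)
    have h2 := hQ.eq_two_mul_fib (j + 2) (by omega) (by omega)
    have hfib : (fib (2 * (j + 3)) : ℤ) + fib (2 * (j + 1)) = 3 * fib (2 * (j + 2)) := by
      exact_mod_cast fib_add_four_add_fib_s18 (2 * j + 2)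
    rw [hQ.eq_three_mul_sub (by omega) (by exact_mod_cast hjk)]
    push_cast at h1 h2 ⊢
    rw [show (j : ℤ) + 3 - 1 = j + 2 by ring, show (j : ℤ) + 3 - 2 = j + 1 by ring, h1, h2]
    linarith

end IsPellLucas

theorem seven_mul_le_two_pow_sub_four {m : ℕ} (hm : 11 ≤ m) : 7 * m ≤ 2 ^ (m - 4) := by
  induction m, hm using Nat.le_induction with
  | base => norm_num
  | succ m hm ih =>
    rw [show m + 1 - 4 = m - 4 + 1 by omega, pow_succ]
    omega

set_option synthInstance.maxSize 4000 in
theorem two_mul_fib_two_mul_eq_pow_of_lt :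
    ∀ m < 11, 2 ≤ m → ∀ n < 7 * m, 1 ≤ n → ∀ y < 101,
      2 * fib (2 * n) = y ^ m → (n, m, y) = (3, 2, 4) ∨ (n, m, y) = (3, 4, 2) := by
  decide +kernel

theorem two_mul_fib_two_mul_eq_pow {n m y : ℕ} (hn : 1 ≤ n) (hm : 2 ≤ m) (hy100 : y ≤ 100)
    (h : 2 * fib (2 * n) = y ^ m) :
    (n, m, y) = (3, 2, 4) ∨ (n, m, y) = (3, 4, 2) := by
  have hF : fib (2 * n) ≠ 0 := (fib_pos.2 (by omega)).ne'
  have hval : m - 1 ≤ padicValNat 2 (fib (2 * n)) := by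
    have hy2 : 2 ∣ y := prime_two.dvd_of_dvd_pow (h ▸ dvd_mul_right 2 _)
    have h2m : 2 * 2 ^ (m - 1) ∣ 2 * fib (2 * n) := by
      rw [h, ← _root_.pow_succ', Nat.sub_add_cancel (by omega)]
      exact pow_dvd_pow_of_dvd hy2 m
    exact (padicValNat_dvd_iff_le hF).1 (Nat.dvd_of_mul_dvd_mul_left two_pos h2m)
  have hdvd : 2 ^ (m - 4) ∣ n := by
    have hle := padicValNat_two_fib_le (2 * n)
    rw [padicValNat.mul two_ne_zero (by omega), padicValNat.self one_lt_two] at hle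
    exact (padicValNat_dvd_iff_le (by omega)).2 (by omega)
  have hn7 : n < 7 * m := by
    have hgrow : 2 ^ n ≤ y ^ m := by
      obtain ⟨j, rfl⟩ : ∃ j, n = j + 1 := ⟨n - 1, by omega⟩
      rw [← h, _root_.pow_succ', show 2 * (j + 1) = 2 * j + 2 by ring]
      exact Nat.mul_le_mul_left 2 (two_pow_le_fib_two_mul_add_two j)
    have : y ^ m < 2 ^ (7 * m) := by
      rw [pow_mul]
      exact Nat.pow_lt_pow_left (by omega) (by omega)
    exact (Nat.pow_lt_pow_iff_right (by norm_num)).1 (hgrow.trans_lt this)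
  have hm10 : m < 11 := by
    by_contra! hm11
    have := Nat.le_of_dvd (by omega) hdvd
    have := seven_mul_le_two_pow_sub_four hm11
    omega
  exact two_mul_fib_two_mul_eq_pow_of_lt m hm10 hm n hn7 hn y (by omega) h

theorem small_solutions_general (k n m y : ℕ) (hm : 2 ≤ m)
    (hn1 : 1 ≤ n) (hnk : n ≤ k)
    (Q : ℤ → ℤ)
    (hQinit : ∀ j : ℤ, 2 - (k : ℤ) ≤ j → j ≤ -1 → Q j = 0)
    (hQ0 : Q 0 = 2) (hQ1 : Q 1 = 2)
    (hQrec : ∀ j : ℤ, 2 ≤ j →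
      Q j = 2 * Q (j - 1) + ∑ i ∈ Finset.Icc 2 k, Q (j - (i : ℤ)))
    (heq : Q (n : ℤ) = (y : ℤ) ^ m)
    (hy100 : y ≤ 100) :
    (n, m, y) = (3, 2, 4) ∨ (n, m, y) = (3, 4, 2) := by
  have hQ : IsPellLucas k Q := ⟨hQinit, hQ0, hQ1, hQrec⟩
  rw [hQ.eq_two_mul_fib n hn1 hnk] at heq
  exact two_mul_fib_two_mul_eq_pow hn1 hm hy100 (by exact_mod_cast heq)

/-- Suppose n, m, y, k are positive integers with k ≥ 2, y ≥ 2, m ≥ 2,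
1 ≤ n ≤ k, and `Q_n^{(k)} = y^m`. Then 2 ≤ y ≤ 100 implies
(n, m, y) = (3, 2, 4) or (n, m, y) = (3, 4, 2). -/
theorem small_solutions (k n m y : ℕ) (hk : 2 ≤ k) (hy : 2 ≤ y) (hm : 2 ≤ m)
    (hn1 : 1 ≤ n) (hnk : n ≤ k)
    (Q : ℤ → ℤ)
    (hQinit : ∀ j : ℤ, 2 - (k : ℤ) ≤ j → j ≤ -1 → Q j = 0)
    (hQ0 : Q 0 = 2) (hQ1 : Q 1 = 2)
    (hQrec : ∀ j : ℤ, 2 ≤ j →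
      Q j = 2 * Q (j - 1) + ∑ i ∈ Finset.Icc 2 k, Q (j - (i : ℤ)))
    (heq : Q (n : ℤ) = (y : ℤ) ^ m)
    (hy100 : y ≤ 100) :
    (n, m, y) = (3, 2, 4) ∨ (n, m, y) = (3, 4, 2) :=
  small_solutions_general k n m y hm hn1 hnk Q hQinit hQ0 hQ1 hQrec heq hy100
end

section
/- Let k ≥ 2 be an integer and α the unique positive real root of x^k - 2x^{k-1} - ... - x - 1. If y ≥ 2 is an integer, then log y / log α is irrational. -/
open Polynomial Finset

lemma inv_integral (k : ℕ) (hk : 2 ≤ k) (α : ℝ) (hαpos : 0 < α)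
    (hαroot : α ^ k - 2 * α ^ (k - 1) - ∑ i ∈ Finset.range (k - 1), α ^ i = 0) :
    IsIntegral ℤ (α⁻¹) := by
  set P : ℤ[X] := X ^ k + ((∑ i ∈ Finset.range (k - 2), X ^ (i + 2)) + C 2 * X - 1) with hP
  have hkW : ∀ m : ℕ, m < k → ((m : WithBot ℕ) < (k : ℕ)) := by
    intro m hm; exact_mod_cast hm
  have hmon : P.Monic := by
    apply monic_X_pow_add
    apply lt_of_le_of_lt (degree_sub_le _ _)
    rw [max_lt_iff]
    constructor
    · apply lt_of_le_of_lt (degree_add_le _ _)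
      rw [max_lt_iff]
      constructor
      · apply lt_of_le_of_lt (degree_sum_le _ _)
        refine (Finset.sup_lt_iff (WithBot.bot_lt_coe k)).mpr fun i hi => ?_
        simp only [Finset.mem_range] at hi
        exact lt_of_le_of_lt (degree_X_pow_le _) (hkW (i+2) (by omega))
      · rw [degree_C_mul_X (by norm_num)]
        exact_mod_cast hkW 1 (by omega)
    · rw [degree_one]
      exact_mod_cast hkW 0 (by omega)
  have hsum : (∑ i ∈ Finset.range (k - 2), (α⁻¹) ^ (i + 2)) + α⁻¹ ^ k
      = ∑ i ∈ Finset.range (k - 1), (α⁻¹) ^ (i + 2) := by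
    have h : k - 1 = (k - 2) + 1 := by omega
    rw [h, Finset.sum_range_succ]
    congr 2
    omega
  have hne : α ≠ 0 := ne_of_gt hαpos
  have hαk : α ^ k ≠ 0 := pow_ne_zero _ hne
  have key : (∑ i ∈ Finset.range (k - 1), (α⁻¹) ^ (i + 2)) + 2 * α⁻¹ - 1 = 0 := by
    have expand : α ^ k * ((∑ i ∈ Finset.range (k - 1), (α⁻¹) ^ (i + 2)) + 2 * α⁻¹ - 1)
        = (∑ i ∈ Finset.range (k - 1), α ^ i) + 2 * α ^ (k-1) - α ^ k := by
      rw [mul_sub, mul_add, Finset.mul_sum]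
      have t1 : ∀ i ∈ Finset.range (k - 1), α ^ k * (α⁻¹) ^ (i + 2) = α ^ (k - 2 - i) := by
        intro i hi
        simp only [Finset.mem_range] at hi
        rw [inv_pow, ← div_eq_mul_inv, div_eq_iff (pow_ne_zero _ hne), ← pow_add]
        congr 1; omega
      rw [Finset.sum_congr rfl t1]
      have t2 : ∑ i ∈ Finset.range (k - 1), α ^ (k - 2 - i)
          = ∑ i ∈ Finset.range (k - 1), α ^ i := by
        rw [show (∑ i ∈ Finset.range (k-1), α ^ (k-2-i))
            = ∑ i ∈ Finset.range (k-1), α ^ (k-1-1-i) from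
          Finset.sum_congr rfl fun i hi => by rw [show k-2-i = k-1-1-i by omega]]
        exact Finset.sum_range_reflect (fun i => α ^ i) (k - 1)
      rw [t2]
      have hk1 : α ^ k = α ^ (k - 1) * α := by
        rw [← pow_succ]; congr 1; omega
      have t3 : α ^ k * (2 * α⁻¹) = 2 * α ^ (k-1) := by
        rw [hk1]; field_simp
      rw [t3, mul_one]
    have h0 : α ^ k * ((∑ i ∈ Finset.range (k - 1), (α⁻¹) ^ (i + 2)) + 2 * α⁻¹ - 1) = 0 := by
      rw [expand]; linarith [hαroot]
    exact (mul_eq_zero.mp h0).resolve_left hαk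
  refine ⟨P, hmon, ?_⟩
  rw [hP]
  simp only [eval₂_add, eval₂_sub, eval₂_mul, eval₂_pow, eval₂_X, eval₂_C, eval₂_one,
    eval₂_finset_sum]
  have h2 : (algebraMap ℤ ℝ) 2 = 2 := by norm_num
  rw [h2]
  calc α⁻¹ ^ k + ((∑ i ∈ Finset.range (k - 2), α⁻¹ ^ (i + 2)) + 2 * α⁻¹ - 1)
      = ((∑ i ∈ Finset.range (k - 2), (α⁻¹) ^ (i + 2)) + α⁻¹ ^ k) + 2 * α⁻¹ - 1 := by ring
    _ = (∑ i ∈ Finset.range (k - 1), (α⁻¹) ^ (i + 2)) + 2 * α⁻¹ - 1 := by rw [hsum]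
    _ = 0 := key

/-- Let k ≥ 2 and α the unique positive real root of `x^k - 2x^(k-1) - ⋯ - x - 1`.
If y ≥ 2 is an integer, then `log y / log α` is irrational. -/
theorem log_ratio_irrational (k : ℕ) (hk : 2 ≤ k)
    (α : ℝ) (hαpos : 0 < α)
    (hαroot : α ^ k - 2 * α ^ (k - 1) - ∑ i ∈ Finset.range (k - 1), α ^ i = 0)
    (y : ℕ) (hy : 2 ≤ y) :
    Irrational (Real.log y / Real.log α) := by
  -- α > 2
  have hS : 0 < ∑ i ∈ Finset.range (k - 1), α ^ i := by
    apply Finset.sum_pos (fun i _ => pow_pos hαpos i)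
    exact Finset.nonempty_range_iff.mpr (by omega)
  have hα2 : 2 < α := by
    have hks : α ^ k = α ^ (k - 1) * α := by
      rw [← pow_succ]; congr 1; omega
    nlinarith [pow_pos hαpos (k - 1)]
  have hlogα : 0 < Real.log α := Real.log_pos (by linarith)
  have hlogy : 0 < Real.log y := Real.log_pos (by exact_mod_cast by omega)
  rintro ⟨q, hq⟩
  have hqpos : 0 < q := by
    have : (0:ℝ) < (q:ℝ) := by rw [hq]; positivity
    exact_mod_cast this
  set a : ℕ := q.num.toNat with ha
  set b : ℕ := q.den with hb
  have hapos : 0 < a := by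
    have := Rat.num_pos.mpr hqpos
    omega
  have hbpos : 0 < b := q.pos
  have hanum : (q.num : ℝ) = (a : ℝ) := by
    rw [ha]; norm_cast; omega
  have hE : (a : ℝ) * Real.log α = (b : ℝ) * Real.log y := by
    have h1 : (q:ℝ) * Real.log α = Real.log y := by
      rw [hq]; field_simp
    have h2 : (q:ℝ) = (q.num : ℝ) / (q.den : ℝ) := by
      rw [Rat.cast_def]
    rw [h2, hanum] at h1
    have hbne : ((b:ℝ)) ≠ 0 := by positivity
    rw [hb]
    field_simp at h1 ⊢
    linarith [h1]
  have hpow : α ^ a = (y : ℝ) ^ b := by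
    have h1 : Real.log (α ^ a) = Real.log ((y:ℝ) ^ b) := by
      rw [Real.log_pow, Real.log_pow]; exact_mod_cast hE
    have h2 := Real.exp_log (pow_pos hαpos a)
    have h3 := Real.exp_log (pow_pos (show (0:ℝ) < y by positivity) b)
    rw [← h2, ← h3, h1]
  set N : ℕ := y ^ b with hNdef
  have hN2 : 2 ≤ N := le_trans hy (Nat.le_self_pow (by omega) y)
  have hint : IsIntegral ℤ ((α⁻¹) ^ a) := (inv_integral k hk α hαpos hαroot).pow a
  have hval : (α⁻¹) ^ a = ((N:ℝ))⁻¹ := by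
    rw [inv_pow, hpow, hNdef]; push_cast; ring
  rw [hval] at hint
  have hcast : ((N:ℝ))⁻¹ = (algebraMap ℚ ℝ).toIntAlgHom ((N:ℚ))⁻¹ := by
    simp [RingHom.toIntAlgHom]
  rw [hcast, isIntegral_algHom_iff _ ((algebraMap ℚ ℝ).injective)] at hint
  obtain ⟨z, hz⟩ := IsIntegrallyClosed.isIntegral_iff.mp hint
  have hz' : (z : ℚ) = ((N:ℚ))⁻¹ := by rw [← hz]; simp
  have h01 : (0:ℚ) < ((N:ℚ))⁻¹ ∧ ((N:ℚ))⁻¹ < 1 := by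
    constructor
    · positivity
    · rw [inv_lt_one_iff₀]; right; exact_mod_cast by omega
  rw [← hz'] at h01
  have : 0 < z ∧ z < 1 := by exact_mod_cast h01
  omega
end
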